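/- arXiv:1908.05248 — 4 statements merged into one kernel-verified Lean document; each statement's English description precedes it below -/
import Mathlib

section
/- Let H(G,g,χ,γ) act linearly and inner faithfully on a connected graded affine k-algebra A generated in degree one by A_1 = span_k{u_1,…,u_t}. Assume g acts diagonally on A_1, say g·u_i = α_i u_i with α_i ∈ k^×, that m := ord(χ(g)) ≥ 3, and that the action of x on the basis (u_1,…,u_t) of A_1 is given by the matrix (η_{ij}), i.e. x·u_j = Σ_i η_{ij} u_i. Then η_{ij}η_{ji} = 0 for all i,j; in particular η_{kk} = 0 for all k. -/
/-- Action data for the Krop–Radford rank-one pointed Hopf algebra `H(G,g,χ,γ)` on a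
`k`-algebra `A`: the group `G` acts by `k`-algebra automorphisms, the skew-primitive
generator `x` acts as a `(g,1)`-skew derivation, subject to the defining relations
`a·x = χ(a) x·a` (for `a ∈ G`) and `x^m = γ(g^m - 1)` where `m = ord(χ(g))`.  Giving
such data is exactly the same as making `A` a left `H(G,g,χ,γ)`-module algebra. -/
structure KRAction (k : Type) [Field k] (G : Type) [Group G] (g : G) (χ : G →* k) (gam : k)
    (A : Type) [Ring A] [Algebra k A] where
  ρ : G →* (A ≃ₐ[k] A)
  x : Module.End k A
  comm : ∀ (h : G) (a : A), ρ h (x a) = χ h • x (ρ h a)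
  skew : ∀ a b : A, x (a * b) = ρ g a * x b + x a * b
  x_pow : (x ^ orderOf (χ g) : Module.End k A) =
      gam • ((ρ (g ^ orderOf (χ g))).toLinearMap - LinearMap.id)

/-- Inner faithfulness of an `H(G,g,χ,γ)`-action: no nonzero Hopf ideal of `H(G,g,χ,γ)`
annihilates `A`; concretely (via the classification of skew-primitives of `H(G,g,χ,γ)`),
`x` acts by a nonzero operator and `G` acts faithfully. -/
def KRAction.InnerFaithful {k : Type} [Field k] {G : Type} [Group G] {g : G} {χ : G →* k}
    {gam : k} {A : Type} [Ring A] [Algebra k A] (T : KRAction k G g χ gam A) : Prop :=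
  T.x ≠ 0 ∧ Function.Injective T.ρ

/-
Since `h x = χ(h) x h` in `H`, the operator `x` maps the `β`-eigenspace of a grouplike `h`
into its `χ(h) β`-eigenspace. So if `η_{ij} ≠ 0` then `α_i = χ(g) α_j`, and if moreover
`η_{ji} ≠ 0` then `α_i = χ(g)² α_i`, i.e. `χ(g)² = 1`, which is impossible when
`ord(χ(g)) ≥ 3`.
-/

theorem sq_ne_one_of_three_le_orderOf {M : Type*} [Monoid M] {q : M}
    (hq : 3 ≤ orderOf q) : q ^ 2 ≠ 1 := fun h =>
  absurd (Nat.le_of_dvd two_pos (orderOf_dvd_of_pow_eq_one h)) (by omega)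

namespace KRAction

variable {k : Type} [Field k] {G : Type} [Group G] {g : G} {χ : G →* k} {gam : k}
  {A : Type} [Ring A] [Algebra k A]

theorem eigenvalue_eq_of_coeff_ne_zero (T : KRAction k G g χ gam A) (h : G) {t : ℕ}
    {u : Fin t → A} (hind : LinearIndependent k u) {β : Fin t → k}
    (hdiag : ∀ i, T.ρ h (u i) = β i • u i) {η : Fin t → Fin t → k}
    (hη : ∀ j, T.x (u j) = ∑ i, η i j • u i) {i j : Fin t} (hij : η i j ≠ 0) :
    β i = χ h * β j := by
  have hcomm := T.comm h (u j)
  rw [hη j, hdiag j, map_sum, map_smul, hη j] at hcomm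
  simp only [map_smul, hdiag, smul_smul, Finset.smul_sum] at hcomm
  have hzero : ∑ l, (η l j * β l - χ h * β j * η l j) • u l = 0 := by
    simp only [sub_smul, Finset.sum_sub_distrib, hcomm, mul_assoc, sub_self]
  have hcoeff := sub_eq_zero.mp (Fintype.linearIndependent_iff.mp hind _ hzero i)
  exact mul_left_cancel₀ hij (by rw [hcoeff]; ring)

end KRAction

theorem stmt_0_general {k : Type} [Field k] {G : Type} [Group G]
    (g : G) (χ : G →* k) (gam : k)
    {A : Type} [Ring A] [Algebra k A]
    {t : ℕ} (u : Fin t → A)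
    (hind : LinearIndependent k u)
    {m : ℕ} (hm : orderOf (χ g) = m) (hm3 : 3 ≤ m)
    (T : KRAction k G g χ gam A)
    (α : Fin t → k) (hα : ∀ i, α i ≠ 0)
    (hdiag : ∀ i, T.ρ g (u i) = α i • u i)
    (η : Fin t → Fin t → k)
    (hη : ∀ j, T.x (u j) = ∑ i, η i j • u i) :
    (∀ i j, η i j * η j i = 0) ∧ (∀ i, η i i = 0) := by
  have hq : χ g ^ 2 ≠ 1 := sq_ne_one_of_three_le_orderOf (hm ▸ hm3)
  have hprod : ∀ i j, η i j * η j i = 0 := by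
    intro i j
    by_contra hne
    have hij := T.eigenvalue_eq_of_coeff_ne_zero g hind hdiag hη (left_ne_zero_of_mul hne)
    have hji := T.eigenvalue_eq_of_coeff_ne_zero g hind hdiag hη (right_ne_zero_of_mul hne)
    have hcycle : α i * 1 = α i * χ g ^ 2 := by linear_combination hij + χ g * hji
    exact hq (mul_left_cancel₀ (hα i) hcycle).symm
  exact ⟨hprod, fun i => mul_self_eq_zero.mp (hprod i i)⟩

/-- Let `H(G,g,χ,γ)` act linearly and inner faithfully on a connected graded
affine `k`-algebra `A` generated in degree one by `A_1 = span_k{u_1,…,u_t}`.  Assume `g`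
acts diagonally on `A_1`, say `g·u_i = α_i u_i` with `α_i ∈ kˣ`, that `m := ord(χ(g)) ≥ 3`,
and that the action of `x` on the basis `(u_1,…,u_t)` of `A_1` is given by the matrix
`(η_{ij})`, i.e. `x·u_j = Σ_i η_{ij} u_i`.  Then `η_{ij} η_{ji} = 0` for all `i,j`; in
particular `η_{kk} = 0` for all `k`. -/
theorem stmt_0 {k : Type} [Field k] {G : Type} [Group G] [Fintype G]
    (g : G) (hgc : g ∈ Subgroup.center G) (χ : G →* k) (gam : k)
    {A : Type} [Ring A] [Algebra k A]
    (𝒜 : ℕ → Submodule k A) [GradedAlgebra 𝒜]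
    (hconn : 𝒜 0 = Submodule.span k {(1 : A)})
    (haff : ∀ i, Module.Finite k (𝒜 i))
    (hgen : Algebra.adjoin k ((𝒜 1 : Submodule k A) : Set A) = ⊤)
    {t : ℕ} (u : Fin t → A)
    (hone : 𝒜 1 = Submodule.span k (Set.range u))
    (hind : LinearIndependent k u)
    {m : ℕ} (hm : orderOf (χ g) = m) (hm3 : 3 ≤ m)
    (T : KRAction k G g χ gam A)
    (hlinG : ∀ (h : G), ∀ a ∈ 𝒜 1, T.ρ h a ∈ 𝒜 1)
    (hlinx : ∀ a ∈ 𝒜 1, T.x a ∈ 𝒜 1)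
    (hif : T.InnerFaithful)
    (α : Fin t → k) (hα : ∀ i, α i ≠ 0)
    (hdiag : ∀ i, T.ρ g (u i) = α i • u i)
    (η : Fin t → Fin t → k)
    (hη : ∀ j, T.x (u j) = ∑ i, η i j • u i) :
    (∀ i j, η i j * η j i = 0) ∧ (∀ i, η i i = 0) :=
  stmt_0_general g χ gam u hind hm hm3 T α hα hdiag η hη
end

section
/- Let A = k_μ[u,v] (the quantum plane) or A = A_1^μ(k) (the quantum Weyl algebra), with ord(μ) = κ > 1. Then the generalized Taft algebra T = T_n(λ,m,0) acts linearly and inner faithfully on A if and only if n = lcm(κ,m) and the action is given by one of the following: (a) g·u = μu, g·v = λ^{-1}μ v, x·u = 0, x·v = ηu for some η ∈ k^×, and if A = A_1^μ(k) then additionally λ = μ^2; or (b) g·u = λ^{-1}μ^{-1}u, g·v = μ^{-1}v, x·u = ηv for some η ∈ k^×, x·v = 0, and if A = A_1^μ(k) then additionally λ = μ^{-2}. -/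
/-!
On `V = span {u, v}` the actions of `g` and `x` are `2 × 2` matrices. Applying `g` to
`u v = μ v u + c` and comparing coefficients in the basis `vʲ uⁱ` (made available by a faithful
representation on `(ℕ × ℕ) →₀ k`) shows that `g` is diagonal, or antidiagonal with `μ = -1`.
In the diagonal case `g x = λ x g` makes `x` swap the lines `k u` and `k v`, nilpotency of `x`
kills one of the two entries, and applying `x` to the defining relation fixes the eigenvalues of
`g`, whose order is then `lcm κ m`. In the antidiagonal case the same relations force `x = 0`:
for `λ² ≠ 1` already `g x = λ x g` does, and for `λ = -1` one also uses `x² = 0`.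
-/

/-- The defining relation of the algebra `k⟨u,v⟩/(uv - μvu - c)`: for `c = 0` this is the
quantum plane `k_μ[u,v]`, and for `c = 1` it is the quantum Weyl algebra `A_1^μ(k)`. -/
inductive QPWRel (k : Type) [Field k] (μ c : k) :
    FreeAlgebra k (Fin 2) → FreeAlgebra k (Fin 2) → Prop
  | rel : QPWRel k μ c (FreeAlgebra.ι k 0 * FreeAlgebra.ι k 1)
      (μ • (FreeAlgebra.ι k 1 * FreeAlgebra.ι k 0) + algebraMap k (FreeAlgebra k (Fin 2)) c)

/-- The algebra `k⟨u,v⟩/(uv - μvu - c)`. -/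
abbrev QPW (k : Type) [Field k] (μ c : k) : Type := RingQuot (QPWRel k μ c)

/-- The generator `u`. -/
noncomputable def QPW.u (k : Type) [Field k] (μ c : k) : QPW k μ c :=
  RingQuot.mkAlgHom k (QPWRel k μ c) (FreeAlgebra.ι k 0)

/-- The generator `v`. -/
noncomputable def QPW.v (k : Type) [Field k] (μ c : k) : QPW k μ c :=
  RingQuot.mkAlgHom k (QPWRel k μ c) (FreeAlgebra.ι k 1)

/-- Action data for the generalized Taft algebra `T_n(λ, m, γ)` on a `k`-algebra `A`:
the grouplike generator `g` acts as a `k`-algebra automorphism with `g^n = 1`, the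
`(g,1)`-skew-primitive generator `x` acts as a `(g,1)`-skew derivation, and the defining
relations `g x = λ x g` and `x^m = γ(g^m - 1)` hold.  Giving such data is the same as
making `A` a left `T_n(λ, m, γ)`-module algebra. -/
structure TaftAction (k : Type) [Field k] (n m : ℕ) (lam gam : k)
    (A : Type) [Ring A] [Algebra k A] where
  g : A ≃ₐ[k] A
  x : Module.End k A
  g_pow : g ^ n = 1
  comm : ∀ a : A, g (x a) = lam • x (g a)
  skew : ∀ a b : A, x (a * b) = g a * x b + x a * b
  x_pow : (x ^ m : Module.End k A) =
      gam • ((g ^ m : A ≃ₐ[k] A).toLinearMap - LinearMap.id)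

/-- Inner faithfulness of a `T_n(λ,m,γ)`-action: no nonzero Hopf ideal annihilates `A`;
concretely, `x` acts by a nonzero operator and `g` acts by an automorphism of order
exactly `n`. -/
def TaftAction.InnerFaithful {k : Type} [Field k] {n m : ℕ} {lam gam : k}
    {A : Type} [Ring A] [Algebra k A] (T : TaftAction k n m lam gam A) : Prop :=
  T.x ≠ 0 ∧ orderOf T.g = n


theorem pow_smul_eq_of_smul_eq {M R X : Type*} [Monoid M] [Monoid R] [MulAction M X]
    [MulAction R X] [SMulCommClass M R X] {g : M} {a : R} {w : X} (h : g • w = a • w) (N : ℕ) :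
    g ^ N • w = a ^ N • w := by
  induction N with
  | zero => simp
  | succ N ih => rw [pow_succ, mul_smul, h, smul_comm, ih, smul_smul, ← pow_succ']

theorem orderOf_prod_inv_mul_eq_lcm {M : Type*} [DivisionCommMonoid M] (x y : M) :
    orderOf (x, y⁻¹ * x) = (orderOf x).lcm (orderOf y) := by
  rw [← Prod.orderOf (x, y), orderOf_eq_orderOf_iff]
  intro N
  simp only [Prod.pow_mk, Prod.mk_eq_one, mul_pow, inv_pow]
  constructor
  · rintro ⟨hx, hy⟩
    rw [hx, mul_one, inv_eq_one] at hy
    exact ⟨hx, hy⟩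
  · rintro ⟨hx, hy⟩
    rw [hx, hy, inv_one, one_mul]
    exact ⟨rfl, rfl⟩

theorem orderOf_prod_inv_mul_inv_eq_lcm {M : Type*} [DivisionCommMonoid M] (x y : M) :
    orderOf (y⁻¹ * x⁻¹, x⁻¹) = (orderOf x).lcm (orderOf y) := by
  rw [← Prod.orderOf (x, y), orderOf_eq_orderOf_iff]
  intro N
  simp only [Prod.pow_mk, Prod.mk_eq_one, mul_pow, inv_pow, inv_eq_one]
  constructor
  · rintro ⟨hy, hx⟩
    rw [hx, inv_one, mul_one, inv_eq_one] at hy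
    exact ⟨hx, hy⟩
  · rintro ⟨hx, hy⟩
    rw [hx, hy, inv_one, one_mul]
    exact ⟨rfl, rfl⟩

theorem Module.End.mul_eq_zero_of_pow_eq_zero {k M : Type*} [Field k] [AddCommGroup M]
    [Module k M] {f : Module.End k M} {m : ℕ} (hf : f ^ m = 0) {w₁ w₂ : M} (hw₁ : w₁ ≠ 0)
    {β γ : k} (h₁ : f w₁ = β • w₂) (h₂ : f w₂ = γ • w₁) : β * γ = 0 := by
  have hsq : f ^ 2 • w₁ = (β * γ) • w₁ := by
    rw [Module.End.smul_def, pow_two, Module.End.mul_apply, h₁, map_smul, h₂, smul_smul]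
  have h := pow_smul_eq_of_smul_eq hsq m
  rw [← pow_mul, mul_comm, pow_mul, hf, zero_pow two_ne_zero, zero_smul, eq_comm,
    smul_eq_zero] at h
  exact (pow_eq_zero_iff'.mp (h.resolve_right hw₁)).1

theorem Submodule.mapsTo_span_pair {k M : Type*} [Field k] [AddCommGroup M] [Module k M]
    (f : M →ₗ[k] M) {u v : M} (hu : f u ∈ span k {u, v}) (hv : f v ∈ span k {u, v}) :
    ∀ a ∈ span k {u, v}, f a ∈ span k {u, v} := fun _ ha =>
  (span_le (p := (span k {u, v}).comap f)).mpr (by rintro _ (rfl | rfl) <;> assumption) ha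

theorem AlgEquiv.orderOf_eq_orderOf_prod {k A : Type*} [Field k] [Ring A] [Algebra k A]
    {u v : A} (hadj : Algebra.adjoin k {u, v} = ⊤) (hu : u ≠ 0) (hv : v ≠ 0) (G : A ≃ₐ[k] A)
    {a d : k} (hGu : G u = a • u) (hGv : G v = d • v) : orderOf G = orderOf (a, d) := by
  rw [orderOf_eq_orderOf_iff]
  intro N
  have hGNu := pow_smul_eq_of_smul_eq (g := G) hGu N
  have hGNv := pow_smul_eq_of_smul_eq (g := G) hGv N
  rw [AlgEquiv.smul_def] at hGNu hGNv
  rw [Prod.pow_mk, Prod.mk_eq_one]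
  constructor
  · intro h
    rw [h, AlgEquiv.one_apply] at hGNu hGNv
    exact ⟨smul_left_injective k hu (by simpa using hGNu.symm),
      smul_left_injective k hv (by simpa using hGNv.symm)⟩
  · rintro ⟨ha, hd⟩
    refine AlgEquiv.coe_toAlgHom_injective (AlgHom.ext_of_adjoin_eq_top hadj ?_)
    rintro _ (rfl | rfl)
    · simp [hGNu, ha]
    · simp [hGNv, hd]

namespace TaftAction

variable {k A : Type} [Field k] [Ring A] [Algebra k A] {n m : ℕ} {lam gam : k}

theorem x_one (T : TaftAction k n m lam gam A) : T.x 1 = 0 := by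
  simpa using T.skew 1 1

theorem x_eq_zero_of_adjoin_eq_top (T : TaftAction k n m lam gam A) {s : Set A}
    (hs : Algebra.adjoin k s = ⊤) (h : ∀ a ∈ s, T.x a = 0) : T.x = 0 := by
  ext a
  induction (hs ▸ Algebra.mem_top : a ∈ Algebra.adjoin k s) using Algebra.adjoin_induction with
  | mem a ha => exact h a ha
  | algebraMap r => simp [Algebra.algebraMap_eq_smul_one, T.x_one]
  | add a b _ _ ha hb => simp [ha, hb]
  | mul a b _ _ ha hb => simp [T.skew, ha, hb]

theorem one_lt_of_x_ne_zero (T : TaftAction k n m lam 0 A) (hx : T.x ≠ 0) : 1 < m := by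
  have hxm : T.x ^ m = 0 := by rw [T.x_pow, zero_smul]
  by_contra! hm
  interval_cases m
  · exact hx (by rw [← mul_one T.x, ← pow_zero T.x, hxm, mul_zero])
  · exact hx (by rwa [pow_one] at hxm)

theorem x_map_relation (T : TaftAction k n m lam gam A) {μ c : k} {u v : A}
    (h : u * v = μ • (v * u) + c • 1) :
    T.g u * T.x v + T.x u * v = μ • (T.g v * T.x u + T.x v * u) := by
  simpa [T.skew, T.x_one] using congrArg T.x h

section Coordinates

variable (T : TaftAction k n m lam gam A) {u v : A} {a b a' b' d α β γ δ : k}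

theorem comm_coeffs (huv : LinearIndependent k ![u, v]) (hgu : T.g u = a • u + b • v)
    (hgv : T.g v = a' • u + b' • v) (hxu : T.x u = α • u + β • v)
    (hxv : T.x v = γ • u + δ • v) :
    α * a + β * a' = lam * (a * α + b * γ) ∧ α * b + β * b' = lam * (a * β + b * δ) ∧
      γ * a + δ * a' = lam * (a' * α + b' * γ) ∧ γ * b + δ * b' = lam * (a' * β + b' * δ) := by
  have hu := T.comm u
  have hv := T.comm v
  rw [hxu, hgu, map_add, map_smul, map_smul, map_add, map_smul, map_smul, hgu, hgv, hxu,
    hxv] at hu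
  rw [hxv, hgv, map_add, map_smul, map_smul, map_add, map_smul, map_smul, hgu, hgv, hxu,
    hxv] at hv
  obtain ⟨hu₁, hu₂⟩ := huv.eq_of_pair (s := α * a + β * a') (t := α * b + β * b')
    (s' := lam * (a * α + b * γ)) (t' := lam * (a * β + b * δ))
    (by linear_combination (norm := module) hu)
  obtain ⟨hv₁, hv₂⟩ := huv.eq_of_pair (s := γ * a + δ * a') (t := γ * b + δ * b')
    (s' := lam * (a' * α + b' * γ)) (t' := lam * (a' * β + b' * δ))
    (by linear_combination (norm := module) hv)
  exact ⟨hu₁, hu₂, hv₁, hv₂⟩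

theorem comm_coeffs_of_diagonal (huv : LinearIndependent k ![u, v]) (hlam : lam ≠ 1) (ha : a ≠ 0)
    (hd : d ≠ 0) (hgu : T.g u = a • u) (hgv : T.g v = d • v) (hxu : T.x u = α • u + β • v)
    (hxv : T.x v = γ • u + δ • v) :
    α = 0 ∧ δ = 0 ∧ (d - lam * a) * β = 0 ∧ (a - lam * d) * γ = 0 := by
  obtain ⟨h₁, h₂, h₃, h₄⟩ := T.comm_coeffs huv (a := a) (b := 0) (a' := 0) (b' := d)
    (by rw [hgu, zero_smul, add_zero]) (by rw [hgv, zero_smul, zero_add]) hxu hxv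
  have hl : 1 - lam ≠ 0 := sub_ne_zero.mpr hlam.symm
  refine ⟨?_, ?_, by linear_combination h₂, by linear_combination h₃⟩
  · have : α * a * (1 - lam) = 0 := by linear_combination h₁
    simpa [ha, hl] using this
  · have : δ * d * (1 - lam) = 0 := by linear_combination h₄
    simpa [hd, hl] using this

theorem comm_coeffs_of_antidiagonal (huv : LinearIndependent k ![u, v]) (hb : b ≠ 0) (ha' : a' ≠ 0)
    (hgu : T.g u = b • v) (hgv : T.g v = a' • u) (hxu : T.x u = α • u + β • v)
    (hxv : T.x v = γ • u + δ • v) :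
    α = lam * δ ∧ δ = lam * α ∧ β * a' = lam * b * γ ∧ γ * b = lam * a' * β := by
  obtain ⟨h₁, h₂, h₃, h₄⟩ := T.comm_coeffs huv (a := 0) (b := b) (a' := a') (b' := 0)
    (by rw [hgu, zero_smul, zero_add]) (by rw [hgv, zero_smul, add_zero]) hxu hxv
  exact ⟨mul_right_cancel₀ hb (by linear_combination h₂),
    mul_right_cancel₀ ha' (by linear_combination h₃), by linear_combination h₁,
    by linear_combination h₄⟩

end Coordinates

end TaftAction

namespace QPW

variable {k : Type} [Field k] (μ c : k)

local notation "𝐮" => QPW.u k μ c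
local notation "𝐯" => QPW.v k μ c

theorem u_mul_v : 𝐮 * 𝐯 = μ • (𝐯 * 𝐮) + c • 1 := by
  simpa [u, v, Algebra.algebraMap_eq_smul_one] using
    RingQuot.mkAlgHom_rel k (QPWRel.rel (k := k) (μ := μ) (c := c))

theorem adjoin_u_v : Algebra.adjoin k {𝐮, 𝐯} = ⊤ := by
  have h : {𝐮, 𝐯} = RingQuot.mkAlgHom k (QPWRel k μ c) '' Set.range (FreeAlgebra.ι k) := by
    rw [← Set.range_comp, Fin.range_fin_succ, Set.range_unique]
    rfl
  rw [h, Algebra.adjoin_image, FreeAlgebra.adjoin_range_ι, Algebra.map_top, AlgHom.range_eq_top]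
  exact RingQuot.mkAlgHom_surjective k _

theorem u_mem_span : 𝐮 ∈ Submodule.span k {𝐮, 𝐯} := Submodule.subset_span (by simp)

theorem v_mem_span : 𝐯 ∈ Submodule.span k {𝐮, 𝐯} := Submodule.subset_span (by simp)

/-- Left multiplication by `u` in the basis `vʲ uⁱ ↔ single (i, j) 1`, read off from
`u vʲ = μʲ vʲ u + c (1 + μ + ⋯ + μʲ⁻¹) vʲ⁻¹` (at `j = 0` the truncated `j - 1` carries the
coefficient `0`). -/
noncomputable def uOp : Module.End k ((ℕ × ℕ) →₀ k) :=
  Finsupp.lsum k fun p => LinearMap.toSpanSingleton k _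
    (Finsupp.single (p.1 + 1, p.2) (μ ^ p.2) +
      Finsupp.single (p.1, p.2 - 1) (c * ∑ i ∈ Finset.range p.2, μ ^ i))

noncomputable def vOp : Module.End k ((ℕ × ℕ) →₀ k) :=
  Finsupp.lsum k fun p => LinearMap.toSpanSingleton k _ (Finsupp.single (p.1, p.2 + 1) 1)

@[simp] theorem uOp_single (p : ℕ × ℕ) (r : k) :
    uOp μ c (Finsupp.single p r) = Finsupp.single (p.1 + 1, p.2) (r * μ ^ p.2) +
      Finsupp.single (p.1, p.2 - 1) (r * (c * ∑ i ∈ Finset.range p.2, μ ^ i)) := by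
  rw [uOp, Finsupp.lsum_single, LinearMap.toSpanSingleton_apply, smul_add,
    Finsupp.smul_single', Finsupp.smul_single']

@[simp] theorem vOp_single (p : ℕ × ℕ) (r : k) :
    vOp (k := k) (Finsupp.single p r) = Finsupp.single (p.1, p.2 + 1) r := by
  rw [vOp, Finsupp.lsum_single, LinearMap.toSpanSingleton_apply, Finsupp.smul_single', mul_one]

theorem uOp_mul_vOp :
    uOp μ c * vOp = μ • (vOp * uOp μ c) + algebraMap k (Module.End k ((ℕ × ℕ) →₀ k)) c := by
  refine Finsupp.lhom_ext fun ⟨i, j⟩ r => ?_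
  simp only [Module.End.mul_apply, LinearMap.add_apply, LinearMap.smul_apply,
    Module.algebraMap_end_apply, uOp_single, vOp_single, map_add, Finsupp.smul_single', smul_add]
  ext ⟨a, b⟩
  simp only [Finsupp.add_apply, Finsupp.single_apply, Prod.mk.injEq, geom_sum_succ]
  rcases j with _ | j <;> split_ifs <;> first | omega | ring

noncomputable def rep : QPW k μ c →ₐ[k] Module.End k ((ℕ × ℕ) →₀ k) :=
  RingQuot.liftAlgHom k ⟨FreeAlgebra.lift k ![uOp μ c, vOp], by
    rintro _ _ ⟨⟩
    simpa using uOp_mul_vOp μ c⟩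

/-- The coordinates of an element in the basis `vʲ uⁱ`. -/
noncomputable def normalForm : QPW k μ c →ₗ[k] (ℕ × ℕ) →₀ k :=
  LinearMap.applyₗ (Finsupp.single (0, 0) 1) ∘ₗ (rep μ c).toLinearMap

@[simp] theorem rep_u : rep μ c 𝐮 = uOp μ c := by
  simp [rep, u]

@[simp] theorem rep_v : rep μ c 𝐯 = vOp := by
  simp [rep, v]

@[simp] theorem normalForm_mul (a b : QPW k μ c) :
    normalForm μ c (a * b) = rep μ c a (normalForm μ c b) := by
  simp [normalForm]

@[simp] theorem normalForm_one : normalForm μ c 1 = Finsupp.single (0, 0) 1 := by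
  simp [normalForm]

@[simp] theorem normalForm_u : normalForm μ c 𝐮 = Finsupp.single (1, 0) 1 := by
  simp [normalForm]

@[simp] theorem normalForm_v : normalForm μ c 𝐯 = Finsupp.single (0, 1) 1 := by
  simp [normalForm]

theorem linearIndependent_u_v : LinearIndependent k ![𝐮, 𝐯] := by
  refine LinearIndependent.pair_iff.mpr fun s t h => ?_
  have h' := congrArg (normalForm μ c) h
  exact ⟨by simpa using congrArg (· (1, 0)) h', by simpa using congrArg (· (0, 1)) h'⟩

theorem quadratic_coeffs_eq_zero {p q r s : k}
    (h : p • (𝐮 * 𝐮) + q • (𝐯 * 𝐮) + r • (𝐯 * 𝐯) + s • 1 = 0) :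
    p = 0 ∧ q = 0 ∧ r = 0 ∧ s = 0 := by
  have h' := congrArg (normalForm μ c) h
  exact ⟨by simpa using congrArg (· (2, 0)) h', by simpa using congrArg (· (1, 1)) h',
    by simpa using congrArg (· (0, 2)) h', by simpa using congrArg (· (0, 0)) h'⟩

variable {μ}

theorem algEquiv_diagonal_or_antidiagonal (hμ : μ ≠ 1) (G : QPW k μ c ≃ₐ[k] QPW k μ c)
    {a b a' b' : k} (hu : G 𝐮 = a • 𝐮 + b • 𝐯) (hv : G 𝐯 = a' • 𝐮 + b' • 𝐯) :
    (b = 0 ∧ a' = 0 ∧ a ≠ 0 ∧ b' ≠ 0 ∧ c * (a * b' - 1) = 0) ∨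
      (a = 0 ∧ b' = 0 ∧ b ≠ 0 ∧ a' ≠ 0 ∧ μ = -1) := by
  have hrel := congrArg G (u_mul_v μ c)
  simp only [map_mul, map_add, map_smul, map_one, hu, hv, add_mul, mul_add,
    smul_mul_smul_comm] at hrel
  rw [u_mul_v] at hrel
  obtain ⟨h₁, h₂, h₃, h₄⟩ := quadratic_coeffs_eq_zero μ c (p := a * a' * (1 - μ))
    (q := b * a' * (1 - μ ^ 2)) (r := b * b' * (1 - μ)) (s := c * (a * b' - μ * a' * b - 1))
    (by linear_combination (norm := module) hrel)
  have huv := linearIndependent_u_v μ c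
  have hGu : ¬(a = 0 ∧ b = 0) := by
    rintro ⟨rfl, rfl⟩
    exact huv.ne_zero 0 (G.injective (by simpa using hu))
  have hGv : ¬(a' = 0 ∧ b' = 0) := by
    rintro ⟨rfl, rfl⟩
    exact huv.ne_zero 1 (G.injective (by simpa using hv))
  have h1μ : 1 - μ ≠ 0 := sub_ne_zero.mpr hμ.symm
  have haa' : a * a' = 0 := (mul_eq_zero.mp h₁).resolve_right h1μ
  have hbb' : b * b' = 0 := (mul_eq_zero.mp h₃).resolve_right h1μ
  by_cases ha : a = 0
  · have hb : b ≠ 0 := fun hb => hGu ⟨ha, hb⟩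
    have hb' : b' = 0 := (mul_eq_zero.mp hbb').resolve_left hb
    have ha' : a' ≠ 0 := fun ha' => hGv ⟨ha', hb'⟩
    have hμ2 : (1 - μ) * (1 + μ) = 0 := by
      linear_combination (mul_eq_zero.mp h₂).resolve_left (mul_ne_zero hb ha')
    refine Or.inr ⟨ha, hb', hb, ha', ?_⟩
    linear_combination (mul_eq_zero.mp hμ2).resolve_left h1μ
  · have ha' : a' = 0 := (mul_eq_zero.mp haa').resolve_left ha
    have hb' : b' ≠ 0 := fun hb' => hGv ⟨ha', hb'⟩
    have hb : b = 0 := (mul_eq_zero.mp hbb').resolve_right hb'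
    refine Or.inl ⟨hb, ha', ha, hb', ?_⟩
    simpa [hb] using h₄

end QPW

namespace TaftAction

variable {k : Type} [Field k] {μ c : k} {n m : ℕ} {lam gam : k}

local notation "𝐮" => QPW.u k μ c
local notation "𝐯" => QPW.v k μ c

/-- Action (a) of the classification. -/
def IsTypeA (T : TaftAction k n m lam gam (QPW k μ c)) : Prop :=
  T.g 𝐮 = μ • 𝐮 ∧ T.g 𝐯 = (lam⁻¹ * μ) • 𝐯 ∧ T.x 𝐮 = 0 ∧
    (∃ η : k, η ≠ 0 ∧ T.x 𝐯 = η • 𝐮) ∧ (c ≠ 0 → lam = μ ^ 2)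

/-- Action (b) of the classification. -/
def IsTypeB (T : TaftAction k n m lam gam (QPW k μ c)) : Prop :=
  T.g 𝐮 = (lam⁻¹ * μ⁻¹) • 𝐮 ∧ T.g 𝐯 = μ⁻¹ • 𝐯 ∧ (∃ η : k, η ≠ 0 ∧ T.x 𝐮 = η • 𝐯) ∧
    T.x 𝐯 = 0 ∧ (c ≠ 0 → lam = (μ ^ 2)⁻¹)

theorem x_eq_zero_of_u_v (T : TaftAction k n m lam gam (QPW k μ c)) (hu : T.x 𝐮 = 0)
    (hv : T.x 𝐯 = 0) : T.x = 0 :=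
  T.x_eq_zero_of_adjoin_eq_top (QPW.adjoin_u_v μ c) (by rintro _ (rfl | rfl) <;> assumption)

/-- The skew-derivation rule applied to `u v = μ v u + c`, in coordinates: the coefficients of
`u²`, `v u` and `v²`. -/
theorem skew_coeffs (T : TaftAction k n m lam gam (QPW k μ c)) {a b a' b' α β γ δ : k}
    (hgu : T.g 𝐮 = a • 𝐮 + b • 𝐯) (hgv : T.g 𝐯 = a' • 𝐮 + b' • 𝐯)
    (hxu : T.x 𝐮 = α • 𝐮 + β • 𝐯) (hxv : T.x 𝐯 = γ • 𝐮 + δ • 𝐯) :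
    a * γ = μ * (a' * α + γ) ∧ μ * a * δ + b * γ + μ * α = μ * (μ * a' * β + b' * α + δ) ∧
      b * δ + β = μ * b' * β := by
  have hrel := T.x_map_relation (QPW.u_mul_v μ c)
  simp only [hgu, hgv, hxu, hxv, add_mul, mul_add, smul_mul_assoc, mul_smul_comm] at hrel
  rw [QPW.u_mul_v] at hrel
  obtain ⟨h₁, h₂, h₃, -⟩ := QPW.quadratic_coeffs_eq_zero μ c (p := a * γ - μ * (a' * α + γ))
    (q := μ * a * δ + b * γ + μ * α - μ * (μ * a' * β + b' * α + δ))
    (r := b * δ + β - μ * b' * β) (s := c * (a * δ + α) - μ * c * a' * β)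
    (by linear_combination (norm := module) hrel)
  exact ⟨sub_eq_zero.mp h₁, sub_eq_zero.mp h₂, sub_eq_zero.mp h₃⟩

theorem isTypeA_or_isTypeB_of_diagonal (T : TaftAction k n m lam 0 (QPW k μ c))
    (hlam : IsPrimitiveRoot lam m) (hx : T.x ≠ 0) {a d α β γ δ : k} (ha : a ≠ 0) (hd : d ≠ 0)
    (hc : c * (a * d - 1) = 0) (hgu : T.g 𝐮 = a • 𝐮) (hgv : T.g 𝐯 = d • 𝐯)
    (hxu : T.x 𝐮 = α • 𝐮 + β • 𝐯) (hxv : T.x 𝐯 = γ • 𝐮 + δ • 𝐯) :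
    T.IsTypeA ∨ T.IsTypeB := by
  have hm := T.one_lt_of_x_ne_zero hx
  have hlam0 : lam ≠ 0 := hlam.ne_zero (by omega)
  have huv := QPW.linearIndependent_u_v μ c
  obtain ⟨rfl, rfl, hβd, hγa⟩ :=
    T.comm_coeffs_of_diagonal huv (hlam.ne_one hm) ha hd hgu hgv hxu hxv
  obtain ⟨hs₁, -, hs₃⟩ := T.skew_coeffs (a := a) (b := 0) (a' := 0) (b' := d) (by simp [hgu])
    (by simp [hgv]) hxu hxv
  simp only [zero_smul, zero_add, add_zero] at hxu hxv
  have hβγ : β * γ = 0 := Module.End.mul_eq_zero_of_pow_eq_zero (by rw [T.x_pow, zero_smul])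
    (huv.ne_zero 0) hxu hxv
  by_cases hβ : β = 0
  · have hγ : γ ≠ 0 := by
      rintro rfl
      exact hx (T.x_eq_zero_of_u_v (by simp [hxu, hβ]) (by simp [hxv]))
    have haμ : a = μ := by
      have : (a - μ) * γ = 0 := by linear_combination hs₁
      exact sub_eq_zero.mp ((mul_eq_zero.mp this).resolve_right hγ)
    have hda : lam * d = a := (sub_eq_zero.mp ((mul_eq_zero.mp hγa).resolve_right hγ)).symm
    refine Or.inl ⟨haμ ▸ hgu, by rw [hgv, ← haμ, ← hda, inv_mul_cancel_left₀ hlam0],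
      by simp [hxu, hβ], ⟨γ, hγ, hxv⟩, fun hc0 => ?_⟩
    have had : a * d = 1 := by simpa [hc0, sub_eq_zero] using hc
    linear_combination a * hda - lam * had + (a + μ) * haμ
  · have hγ : γ = 0 := (mul_eq_zero.mp hβγ).resolve_left hβ
    have hdμ : μ * d = 1 := by
      have : (1 - μ * d) * β = 0 := by linear_combination hs₃
      exact (sub_eq_zero.mp ((mul_eq_zero.mp this).resolve_right hβ)).symm
    have hda : lam * a = d := (sub_eq_zero.mp ((mul_eq_zero.mp hβd).resolve_right hβ)).symm
    have hdμ' : d = μ⁻¹ := eq_inv_of_mul_eq_one_right hdμ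
    refine Or.inr ⟨by rw [hgu, ← hdμ', ← hda, inv_mul_cancel_left₀ hlam0], hdμ' ▸ hgv,
      ⟨β, hβ, hxu⟩, by simp [hxv, hγ], fun hc0 => ?_⟩
    have had : a * d = 1 := by simpa [hc0, sub_eq_zero] using hc
    refine eq_inv_of_mul_eq_one_left ?_
    linear_combination μ ^ 2 * d * hda + (μ * d + 1) * hdμ - lam * μ ^ 2 * had

theorem x_coeffs_eq_zero_of_antidiagonal (T : TaftAction k n m (-1) gam (QPW k μ c))
    (hx2 : T.x ^ 2 = 0) (hμ : μ = -1) (h2 : (2 : k) ≠ 0) {b a' α β γ δ : k} (hb : b ≠ 0)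
    (ha' : a' ≠ 0) (hgu : T.g 𝐮 = b • 𝐯) (hgv : T.g 𝐯 = a' • 𝐮)
    (hxu : T.x 𝐮 = α • 𝐮 + β • 𝐯) (hxv : T.x 𝐯 = γ • 𝐮 + δ • 𝐯) :
    α = 0 ∧ β = 0 ∧ γ = 0 ∧ δ = 0 := by
  have huv := QPW.linearIndependent_u_v μ c
  obtain ⟨-, hδα, -, -⟩ := T.comm_coeffs_of_antidiagonal huv hb ha' hgu hgv hxu hxv
  obtain ⟨hs₁, hs₂, hs₃⟩ := T.skew_coeffs (a := 0) (b := b) (a' := a') (b' := 0) (by simp [hgu])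
    (by simp [hgv]) hxu hxv
  rw [hμ] at hs₁ hs₂ hs₃
  have hx2u := LinearMap.congr_fun hx2 𝐮
  rw [pow_two, Module.End.mul_apply, hxu, map_add, map_smul, map_smul, hxu, hxv,
    LinearMap.zero_apply] at hx2u
  obtain ⟨hq, -⟩ := huv.eq_zero_of_pair (s := α * α + β * γ) (t := α * β + β * δ)
    (by linear_combination (norm := module) hx2u)
  have hβ : β = b * α := by linear_combination hs₃ - b * hδα
  have hγ : γ = -(a' * α) := by linear_combination hs₁
  subst hβ hγ hδα
  -- `hs₂` amounts to `2 α (a' b + 1) = 0` and `hq` to `α² (1 - a' b) = 0`.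
  have hα : (2 : k) ^ 2 * α ^ 2 = 0 := by linear_combination (-α) * hs₂ + 2 * hq
  have hα0 : α = 0 := by simpa [h2] using hα
  simp [hα0]

theorem false_of_antidiagonal (T : TaftAction k n m lam 0 (QPW k μ c))
    (hlam : IsPrimitiveRoot lam m) (hx : T.x ≠ 0) (hμ : μ = -1) (h2 : (2 : k) ≠ 0)
    {b a' α β γ δ : k} (hb : b ≠ 0) (ha' : a' ≠ 0) (hgu : T.g 𝐮 = b • 𝐯) (hgv : T.g 𝐯 = a' • 𝐮)
    (hxu : T.x 𝐮 = α • 𝐮 + β • 𝐯) (hxv : T.x 𝐯 = γ • 𝐮 + δ • 𝐯) : False := by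
  have hm := T.one_lt_of_x_ne_zero hx
  obtain ⟨hαδ, hδα, hβγ, hγβ⟩ :=
    T.comm_coeffs_of_antidiagonal (QPW.linearIndependent_u_v μ c) hb ha' hgu hgv hxu hxv
  suffices α = 0 ∧ β = 0 ∧ γ = 0 ∧ δ = 0 by
    obtain ⟨rfl, rfl, rfl, rfl⟩ := this
    exact hx (T.x_eq_zero_of_u_v (by simp [hxu]) (by simp [hxv]))
  by_cases hlam2 : lam ^ 2 = 1
  · have hlam' : lam = -1 := by
      have : (lam - 1) * (lam + 1) = 0 := by linear_combination hlam2
      exact eq_neg_of_add_eq_zero_left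
        ((mul_eq_zero.mp this).resolve_left (sub_ne_zero.mpr (hlam.ne_one hm)))
    have hm2 : m = 2 :=
      le_antisymm (Nat.le_of_dvd two_pos ((hlam.pow_eq_one_iff_dvd 2).mp hlam2)) hm
    subst hlam' hm2
    exact T.x_coeffs_eq_zero_of_antidiagonal (by rw [T.x_pow, zero_smul]) hμ h2 hb ha' hgu hgv
      hxu hxv
  · have hl : 1 - lam ^ 2 ≠ 0 := sub_ne_zero.mpr (Ne.symm hlam2)
    have hα : α = 0 := by
      have : α * (1 - lam ^ 2) = 0 := by linear_combination hαδ + lam * hδα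
      simpa [hl] using this
    have hβ : β = 0 := by
      have : β * a' * (1 - lam ^ 2) = 0 := by linear_combination hβγ + lam * hγβ
      simpa [hl, ha'] using this
    exact ⟨hα, hβ, by simpa [hβ, hb] using hγβ, by simp [hδα, hα]⟩

theorem orderOf_g_of_isTypeA_or_isTypeB (T : TaftAction k n m lam gam (QPW k μ c)) {κ : ℕ}
    (hμ : IsPrimitiveRoot μ κ) (hlam : IsPrimitiveRoot lam m) (hT : T.IsTypeA ∨ T.IsTypeB) :
    orderOf T.g = κ.lcm m := by
  have huv := QPW.linearIndependent_u_v μ c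
  have hG := AlgEquiv.orderOf_eq_orderOf_prod (QPW.adjoin_u_v μ c) (huv.ne_zero 0) (huv.ne_zero 1)
  rcases hT with hA | hB
  · rw [hG T.g hA.1 hA.2.1, orderOf_prod_inv_mul_eq_lcm, ← hμ.eq_orderOf, ← hlam.eq_orderOf]
  · rw [hG T.g hB.1 hB.2.1, orderOf_prod_inv_mul_inv_eq_lcm, ← hμ.eq_orderOf, ← hlam.eq_orderOf]

theorem linear_innerFaithful_of_isTypeA_or_isTypeB {κ : ℕ}
    (T : TaftAction k (κ.lcm m) m lam gam (QPW k μ c)) (hμ : IsPrimitiveRoot μ κ)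
    (hlam : IsPrimitiveRoot lam m) (hT : T.IsTypeA ∨ T.IsTypeB) :
    (∀ a ∈ Submodule.span k {𝐮, 𝐯}, T.g a ∈ Submodule.span k {𝐮, 𝐯}) ∧
      (∀ a ∈ Submodule.span k {𝐮, 𝐯}, T.x a ∈ Submodule.span k {𝐮, 𝐯}) ∧ T.InnerFaithful := by
  have hu := QPW.u_mem_span μ c
  have hv := QPW.v_mem_span μ c
  have huv := QPW.linearIndependent_u_v μ c
  refine ⟨?_, ?_, ?_, T.orderOf_g_of_isTypeA_or_isTypeB hμ hlam hT⟩
  · refine Submodule.mapsTo_span_pair T.g.toLinearMap ?_ ?_ <;>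
      rcases hT with ⟨hgu, hgv, -⟩ | ⟨hgu, hgv, -⟩ <;>
      simp [hgu, hgv, Submodule.smul_mem, hu, hv]
  · refine Submodule.mapsTo_span_pair T.x ?_ ?_ <;>
      rcases hT with ⟨-, -, hxu, ⟨η, -, hxv⟩, -⟩ | ⟨-, -, ⟨η, -, hxu⟩, hxv, -⟩ <;>
      simp [hxu, hxv, Submodule.smul_mem, hu, hv]
  · intro hx
    rcases hT with ⟨-, -, -, ⟨η, hη, hxv⟩, -⟩ | ⟨-, -, ⟨η, hη, hxu⟩, -, -⟩
    · exact smul_ne_zero hη (huv.ne_zero 0) (by simpa [hx] using hxv.symm)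
    · exact smul_ne_zero hη (huv.ne_zero 1) (by simpa [hx] using hxu.symm)

end TaftAction

theorem stmt_2_general {k : Type} [Field k] {μ c : k} {κ : ℕ} (hμ : IsPrimitiveRoot μ κ)
    (hκ : 1 < κ)
    {n m : ℕ} {lam : k} (hlam : IsPrimitiveRoot lam m)
    (T : TaftAction k n m lam 0 (QPW k μ c)) :
    ((∀ a ∈ Submodule.span k {QPW.u k μ c, QPW.v k μ c},
        T.g a ∈ Submodule.span k {QPW.u k μ c, QPW.v k μ c}) ∧
     (∀ a ∈ Submodule.span k {QPW.u k μ c, QPW.v k μ c},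
        T.x a ∈ Submodule.span k {QPW.u k μ c, QPW.v k μ c}) ∧
     T.InnerFaithful)
    ↔ (n = Nat.lcm κ m ∧
       ((T.g (QPW.u k μ c) = μ • QPW.u k μ c ∧
         T.g (QPW.v k μ c) = (lam⁻¹ * μ) • QPW.v k μ c ∧
         T.x (QPW.u k μ c) = 0 ∧
         (∃ η : k, η ≠ 0 ∧ T.x (QPW.v k μ c) = η • QPW.u k μ c) ∧
         (c ≠ 0 → lam = μ ^ 2)) ∨
        (T.g (QPW.u k μ c) = (lam⁻¹ * μ⁻¹) • QPW.u k μ c ∧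
         T.g (QPW.v k μ c) = μ⁻¹ • QPW.v k μ c ∧
         (∃ η : k, η ≠ 0 ∧ T.x (QPW.u k μ c) = η • QPW.v k μ c) ∧
         T.x (QPW.v k μ c) = 0 ∧
         (c ≠ 0 → lam = (μ ^ 2)⁻¹)))) := by
  have hμ1 : μ ≠ 1 := hμ.ne_one hκ
  constructor
  · rintro ⟨hgV, hxV, hx, hord⟩
    have hu := QPW.u_mem_span μ c
    have hv := QPW.v_mem_span μ c
    obtain ⟨a, b, hgu⟩ := Submodule.mem_span_pair.mp (hgV _ hu)
    obtain ⟨a', b', hgv⟩ := Submodule.mem_span_pair.mp (hgV _ hv)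
    obtain ⟨α, β, hxu⟩ := Submodule.mem_span_pair.mp (hxV _ hu)
    obtain ⟨γ, δ, hxv⟩ := Submodule.mem_span_pair.mp (hxV _ hv)
    rcases QPW.algEquiv_diagonal_or_antidiagonal c hμ1 T.g hgu.symm hgv.symm with
      ⟨rfl, rfl, ha, hb', hc⟩ | ⟨rfl, rfl, hb, ha', hμ'⟩
    · have hT := T.isTypeA_or_isTypeB_of_diagonal hlam hx ha hb' hc (by simpa using hgu.symm)
        (by simpa using hgv.symm) hxu.symm hxv.symm
      exact ⟨hord.symm.trans (T.orderOf_g_of_isTypeA_or_isTypeB hμ hlam hT), hT⟩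
    · have h2 : (2 : k) ≠ 0 := fun h2 => hμ1 (by linear_combination hμ' - h2)
      exact (T.false_of_antidiagonal hlam hx hμ' h2 hb ha' (by simpa using hgu.symm)
        (by simpa using hgv.symm) hxu.symm hxv.symm).elim
  · rintro ⟨rfl, hT⟩
    exact T.linear_innerFaithful_of_isTypeA_or_isTypeB hμ hlam hT

/-- Let `A = k_μ[u,v]` (the quantum plane, `c = 0`) or `A = A_1^μ(k)` (the
quantum Weyl algebra, `c = 1`), with `ord(μ) = κ > 1`.  Then the generalized Taft algebra
`T = T_n(λ,m,0)` acts linearly and inner faithfully on `A` if and only if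
`n = lcm(κ,m)` and the action is given by one of the following:
(a) `g·u = μu`, `g·v = λ⁻¹μv`, `x·u = 0`, `x·v = ηu` for some `η ∈ kˣ`, and if
`A = A_1^μ(k)` then `λ = μ²`; or
(b) `g·u = λ⁻¹μ⁻¹u`, `g·v = μ⁻¹v`, `x·u = ηv` for some `η ∈ kˣ`, `x·v = 0`, and if
`A = A_1^μ(k)` then `λ = μ⁻²`. -/
theorem stmt_2 {k : Type} [Field k] {μ c : k} {κ : ℕ} (hμ : IsPrimitiveRoot μ κ)
    (hκ : 1 < κ) (hc : c = 0 ∨ c = 1)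
    {n m : ℕ} {lam : k} (hlam : IsPrimitiveRoot lam m) (hmn : m ∣ n)
    (T : TaftAction k n m lam 0 (QPW k μ c)) :
    ((∀ a ∈ Submodule.span k {QPW.u k μ c, QPW.v k μ c},
        T.g a ∈ Submodule.span k {QPW.u k μ c, QPW.v k μ c}) ∧
     (∀ a ∈ Submodule.span k {QPW.u k μ c, QPW.v k μ c},
        T.x a ∈ Submodule.span k {QPW.u k μ c, QPW.v k μ c}) ∧
     T.InnerFaithful)
    ↔ (n = Nat.lcm κ m ∧
       ((T.g (QPW.u k μ c) = μ • QPW.u k μ c ∧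
         T.g (QPW.v k μ c) = (lam⁻¹ * μ) • QPW.v k μ c ∧
         T.x (QPW.u k μ c) = 0 ∧
         (∃ η : k, η ≠ 0 ∧ T.x (QPW.v k μ c) = η • QPW.u k μ c) ∧
         (c ≠ 0 → lam = μ ^ 2)) ∨
        (T.g (QPW.u k μ c) = (lam⁻¹ * μ⁻¹) • QPW.u k μ c ∧
         T.g (QPW.v k μ c) = μ⁻¹ • QPW.v k μ c ∧
         (∃ η : k, η ≠ 0 ∧ T.x (QPW.u k μ c) = η • QPW.v k μ c) ∧
         T.x (QPW.v k μ c) = 0 ∧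
         (c ≠ 0 → lam = (μ ^ 2)⁻¹)))) :=
  stmt_2_general hμ hκ hlam T
end

section
/- Suppose H(G,g,χ,γ) acts linearly and inner faithfully on the quantum affine space A = k_p[u_1,…,u_t], where m := ord(χ(g)), t, and ord(p_{ij}) for all i ≠ j are all at least 3, and where g acts diagonally, g·u_i = α_i u_i; write x·u_j = Σ_i η_{ij}u_i. Then: (1) η_{ij}η_{ji} = 0 for all i,j, in particular η_{kk} = 0 for all k; (2) each column of the matrix (η_{ij}) has at most one nonzero entry; (3) each row of (η_{ij}) has at most one nonzero entry; (4) if t > 3 and i,j,k,ℓ are all distinct then η_{ij}η_{kℓ} = 0; (5) if m ≠ 3 then the matrix (η_{ij}) is nilpotent; (6) if ord(g) = m, or if t ≤ m and m ≠ 3, then γ = 0. -/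
/-- Defining relations `u_i u_j = p_{ij} u_j u_i` of quantum affine space. -/
inductive QASRel (k : Type) [Field k] {t : ℕ} (p : Fin t → Fin t → k) :
    FreeAlgebra k (Fin t) → FreeAlgebra k (Fin t) → Prop
  | rel (i j : Fin t) :
      QASRel k p (FreeAlgebra.ι k i * FreeAlgebra.ι k j)
        (p i j • (FreeAlgebra.ι k j * FreeAlgebra.ι k i))

/-- The quantum affine space `k_p[u_1, …, u_t]`. -/
abbrev QAS (k : Type) [Field k] {t : ℕ} (p : Fin t → Fin t → k) : Type :=
  RingQuot (QASRel k p)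

/-- The generators `u_i` of the quantum affine space. -/
noncomputable def QAS.u (k : Type) [Field k] {t : ℕ} (p : Fin t → Fin t → k) (i : Fin t) :
    QAS k p :=
  RingQuot.mkAlgHom k (QASRel k p) (FreeAlgebra.ι k i)

/-!
Comparing `g·(x·u_j)` with `χ(g) x·(g·u_j)` shows that `η_ij ≠ 0` forces `α_i = χ(g) α_j`:
nonzero entries of `η` shift the weights of `g` by `χ(g)`, so a cycle of length `n ≤ 3` in the
support of `η` would give `χ(g)^n = 1`. Applying `x` to `u_i u_j = p_ij u_j u_i` and comparing
the coefficients of `u_i²` and of `u_c u_b` gives `α_i = p_ij` and `p_ab α_b = p_cb`; two nonzero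
entries in one row or column would then force `p = 1` or `p² = 1` for some off-diagonal entry, and
two disjoint nonzero entries force `χ(g)² = 1`. Hence all paths of length three in the support
vanish and `η³ = 0`, so `x^m` kills the generators, and `x^m = γ(g^m - 1)` leaves `γ = 0` or
`g^m` acting trivially, i.e. `ord g = m` by faithfulness.
-/

lemma MvPolynomial.coeff_X_mul_X {k σ : Type*} [CommSemiring k] [Nontrivial k] [DecidableEq σ]
    (a b c d : σ) :
    coeff (Finsupp.single a 1 + Finsupp.single b 1) (X c * X d : MvPolynomial σ k) =
      if c = a ∧ d = b ∨ c = b ∧ d = a then 1 else 0 := by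
  rw [X, X, monomial_mul, coeff_monomial]
  simp [Finsupp.single_add_single_eq_single_add_single one_ne_zero one_ne_zero]

lemma Module.End.pow_apply_eq_sum_matrix_pow {R V ι : Type*} [CommSemiring R] [AddCommMonoid V]
    [Module R V] [Fintype ι] [DecidableEq ι] (f : Module.End R V) (v : ι → V)
    (M : Matrix ι ι R) (hf : ∀ j, f (v j) = ∑ i, M i j • v i) (n : ℕ) (j : ι) :
    (f ^ n) (v j) = ∑ i, (M ^ n) i j • v i := by
  induction n generalizing j with
  | zero => simp [Matrix.one_apply, ite_smul]
  | succ n ih =>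
    simp only [pow_succ, Module.End.mul_apply, hf, map_sum, map_smul, ih, Finset.smul_sum,
      smul_smul, Matrix.mul_apply, Finset.sum_smul]
    rw [Finset.sum_comm]
    simp only [mul_comm]

namespace QAS

open MvPolynomial

variable {k : Type} [Field k] {t : ℕ} (p : Fin t → Fin t → k)

lemma u_mul_u (i j : Fin t) : u k p i * u k p j = p i j • (u k p j * u k p i) := by
  simpa only [u, map_mul, map_smul] using RingQuot.mkAlgHom_rel k (QASRel.rel (p := p) i j)

lemma algHom_ext {B : Type*} [Semiring B] [Algebra k B] {f f' : QAS k p →ₐ[k] B}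
    (h : ∀ i, f (u k p i) = f' (u k p i)) : f = f' :=
  RingQuot.ringQuot_ext' k f f' (FreeAlgebra.hom_ext (funext h))

def twistFactor (i j : Fin t) : k := if j < i then p i j else 1

@[simp]
lemma twistFactor_self (i : Fin t) : twistFactor p i i = 1 := by
  simp [twistFactor]

lemma twistFactor_ne_zero (hpa : ∀ i j, p i j * p j i = 1) (i j : Fin t) :
    twistFactor p i j ≠ 0 := by
  unfold twistFactor
  split_ifs
  · exact left_ne_zero_of_mul_eq_one (hpa i j)
  · exact one_ne_zero

lemma twistFactor_eq_mul (hp1 : ∀ i, p i i = 1) (hpa : ∀ i j, p i j * p j i = 1) (i j : Fin t) :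
    twistFactor p i j = p i j * twistFactor p j i := by
  unfold twistFactor
  rcases lt_trichotomy i j with h | rfl | h
  · simp [h, h.not_gt, hpa]
  · simp [hp1]
  · simp [h, h.not_gt]

/-- `u_i` acts on `k[X_1, …, X_t]` by `f ↦ X_i · f(w_i1 X_1, …, w_it X_t)`, with
`w_ij = twistFactor p i j`; the images of `1` show that the generators and their pairwise
products are independent. -/
noncomputable def twist (i : Fin t) : MvPolynomial (Fin t) k →ₐ[k] MvPolynomial (Fin t) k :=
  aeval fun j => C (twistFactor p i j) * X j

lemma twist_X (i j : Fin t) : twist p i (X j) = C (twistFactor p i j) * X j :=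
  aeval_X _ _

lemma twist_twist (i j : Fin t) (f : MvPolynomial (Fin t) k) :
    twist p i (twist p j f) = twist p j (twist p i f) := by
  suffices (twist p i).comp (twist p j) = (twist p j).comp (twist p i) from
    AlgHom.congr_fun this f
  refine MvPolynomial.algHom_ext fun l => ?_
  simp only [AlgHom.comp_apply, twist_X, map_mul, algHom_C, algebraMap_eq]
  ring

noncomputable def mulTwist (i : Fin t) : Module.End k (MvPolynomial (Fin t) k) :=
  LinearMap.mulLeft k (X i) ∘ₗ (twist p i).toLinearMap

lemma mulTwist_apply (i : Fin t) (f : MvPolynomial (Fin t) k) :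
    mulTwist p i f = X i * twist p i f :=
  rfl

lemma mulTwist_mul_mulTwist (hp1 : ∀ i, p i i = 1) (hpa : ∀ i j, p i j * p j i = 1)
    (i j : Fin t) : mulTwist p i * mulTwist p j = p i j • (mulTwist p j * mulTwist p i) := by
  refine LinearMap.ext fun f => ?_
  simp only [Module.End.mul_apply, LinearMap.smul_apply, mulTwist_apply, map_mul, twist_X,
    twist_twist p i j, twistFactor_eq_mul p hp1 hpa i j, smul_eq_C_mul]
  ring

variable (hp1 : ∀ i, p i i = 1) (hpa : ∀ i j, p i j * p j i = 1)

noncomputable def toEnd : QAS k p →ₐ[k] Module.End k (MvPolynomial (Fin t) k) :=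
  RingQuot.liftAlgHom k ⟨FreeAlgebra.lift k (mulTwist p), by
    rintro _ _ ⟨i, j⟩
    simpa using mulTwist_mul_mulTwist p hp1 hpa i j⟩

lemma toEnd_u (i : Fin t) : toEnd p hp1 hpa (u k p i) = mulTwist p i := by
  rw [u, toEnd, RingQuot.liftAlgHom_mkAlgHom_apply, FreeAlgebra.lift_ι_apply]

noncomputable def toMvPolynomial : QAS k p →ₗ[k] MvPolynomial (Fin t) k :=
  LinearMap.applyₗ 1 ∘ₗ (toEnd p hp1 hpa).toLinearMap

lemma toMvPolynomial_u (i : Fin t) : toMvPolynomial p hp1 hpa (u k p i) = X i := by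
  simp [toMvPolynomial, toEnd_u, mulTwist_apply]

lemma toMvPolynomial_u_mul_u (i j : Fin t) :
    toMvPolynomial p hp1 hpa (u k p i * u k p j) = C (twistFactor p i j) * (X i * X j) := by
  simp [toMvPolynomial, toEnd_u, mulTwist_apply, twist_X]
  ring

lemma linearIndependent_u (hp1 : ∀ i, p i i = 1) (hpa : ∀ i j, p i j * p j i = 1) :
    LinearIndependent k (u k p) := by
  refine .of_comp (toMvPolynomial p hp1 hpa) ?_
  rw [show toMvPolynomial p hp1 hpa ∘ u k p = X from funext (toMvPolynomial_u p hp1 hpa)]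
  exact linearIndependent_X (Fin t) k

end QAS

/-- The relations between the weights `α` of a diagonal `g` and the matrix `η` of `x` forced by
`g x = χ(g) x g` and by the degree-two part of `x·(u_a u_b) = p_ab x·(u_b u_a)`. -/
structure WeightRelations {ι k : Type*} [CommRing k] (p : ι → ι → k) (q : k) (α : ι → k)
    (η : ι → ι → k) : Prop where
  alpha_ne_zero : ∀ i, α i ≠ 0
  alpha_eq_mul : ∀ i j, η i j ≠ 0 → α i = q * α j
  alpha_eq : ∀ i j, i ≠ j → η i j ≠ 0 → α i = p i j
  mul_alpha_eq : ∀ a b c, a ≠ b → a ≠ c → b ≠ c → η c a ≠ 0 → p a b * α b = p c b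

namespace WeightRelations

variable {ι k : Type*} [CommRing k] {p : ι → ι → k} {q : k} {α : ι → k} {η : ι → ι → k}

lemma alpha_eq_mul_mul (h : WeightRelations p q α η) (hpa : ∀ i j, p i j * p j i = 1)
    {a b c : ι} (hab : a ≠ b) (hac : a ≠ c) (hbc : b ≠ c) (hne : η c a ≠ 0) :
    α b = p b a * p c b := by
  linear_combination p b a * h.mul_alpha_eq a b c hab hac hbc hne - α b * hpa b a

variable [IsDomain k]

lemma eta_self (h : WeightRelations p q α η) (hq : q ≠ 1) (i : ι) : η i i = 0 := by
  by_contra hne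
  exact hq ((mul_eq_right₀ (h.alpha_ne_zero i)).mp (h.alpha_eq_mul i i hne).symm)

lemma eta_mul_eta_swap (h : WeightRelations p q α η) (hq : q ^ 2 ≠ 1) (i j : ι) :
    η i j * η j i = 0 := by
  by_contra hne
  obtain ⟨hij, hji⟩ := mul_ne_zero_iff.mp hne
  refine hq ((mul_eq_right₀ (h.alpha_ne_zero i)).mp ?_)
  linear_combination -h.alpha_eq_mul i j hij - q * h.alpha_eq_mul j i hji

lemma leftUnique (h : WeightRelations p q α η) (hq : q ≠ 1) (hpa : ∀ i j, p i j * p j i = 1)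
    (hp : ∀ i j, i ≠ j → p i j ≠ 1) : Relator.LeftUnique fun i j => η i j ≠ 0 := by
  intro i i' j h1 h2
  by_contra hii'
  have hij : i ≠ j := by rintro rfl; exact h1 (h.eta_self hq i)
  have hi'j : i' ≠ j := by rintro rfl; exact h2 (h.eta_self hq i')
  apply hp i i' hii'
  rw [← h.mul_alpha_eq j i' i hi'j.symm hij.symm (Ne.symm hii') h1, h.alpha_eq i' j hi'j h2, hpa]

lemma rightUnique (h : WeightRelations p q α η) (hq0 : q ≠ 0) (hq : q ≠ 1)
    (hpa : ∀ i j, p i j * p j i = 1) (hp : ∀ i j, i ≠ j → p i j ^ 2 ≠ 1) :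
    Relator.RightUnique fun i j => η i j ≠ 0 := by
  intro i j j' h1 h2
  by_contra hjj'
  have hij : i ≠ j := by rintro rfl; exact h1 (h.eta_self hq i)
  have hij' : i ≠ j' := by rintro rfl; exact h2 (h.eta_self hq i)
  have hα : α j = α j' :=
    mul_left_cancel₀ hq0 ((h.alpha_eq_mul i j h1).symm.trans (h.alpha_eq_mul i j' h2))
  have hpi : p i j = p i j' := (h.alpha_eq i j hij h1).symm.trans (h.alpha_eq i j' hij' h2)
  have hsymm : p j j' = p j' j := by
    refine mul_right_cancel₀ (h.alpha_ne_zero j) ?_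
    calc p j j' * α j = p i j' := by rw [hα]; exact h.mul_alpha_eq j j' i hjj' hij.symm hij'.symm h1
      _ = p j' j * α j := by
        rw [← hpi]; exact (h.mul_alpha_eq j' j i (Ne.symm hjj') hij'.symm hij.symm h2).symm
  exact hp j j' hjj' (by rw [sq]; nth_rw 2 [hsymm]; exact hpa j j')

lemma eta_mul_eta_eq_zero (h : WeightRelations p q α η) (hq : q ^ 2 ≠ 1)
    (hpa : ∀ i j, p i j * p j i = 1) {i j l r : ι} (hij : i ≠ j) (hil : i ≠ l) (hir : i ≠ r)
    (hjl : j ≠ l) (hjr : j ≠ r) (hlr : l ≠ r) : η i j * η l r = 0 := by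
  by_contra hne
  obtain ⟨h1, h2⟩ := mul_ne_zero_iff.mp hne
  -- both `α i * α l` and `α j * α r` equal `p i r * p l j`
  have hαα : α i * α l = α j * α r := by
    rw [h.alpha_eq_mul_mul hpa hir.symm hlr.symm hil h2,
      h.alpha_eq_mul_mul hpa hjl hij.symm hil.symm h1,
      h.alpha_eq_mul_mul hpa hjr.symm hlr.symm hjl h2,
      h.alpha_eq_mul_mul hpa hjr hij.symm hir.symm h1]
    linear_combination p i r * p l j * (hpa l i - hpa j r)
  refine hq ((mul_eq_right₀ (mul_ne_zero (h.alpha_ne_zero j) (h.alpha_ne_zero r))).mp ?_)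
  linear_combination hαα - α l * h.alpha_eq_mul i j h1 - q * α j * h.alpha_eq_mul l r h2

lemma eta_mul_eta_mul_eta (h : WeightRelations p q α η) (hq1 : q ≠ 1) (hq2 : q ^ 2 ≠ 1)
    (hq3 : q ^ 3 ≠ 1) (hpa : ∀ i j, p i j * p j i = 1) (a c d b : ι) :
    η a c * (η c d * η d b) = 0 := by
  by_contra hne
  obtain ⟨h1, h2, h3⟩ : η a c ≠ 0 ∧ η c d ≠ 0 ∧ η d b ≠ 0 := by simpa [not_or] using hne
  have hac : a ≠ c := by rintro rfl; exact h1 (h.eta_self hq1 a)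
  have hcd : c ≠ d := by rintro rfl; exact h2 (h.eta_self hq1 c)
  have hdb : d ≠ b := by rintro rfl; exact h3 (h.eta_self hq1 d)
  have had : a ≠ d := by rintro rfl; exact mul_ne_zero h1 h2 (h.eta_mul_eta_swap hq2 a c)
  have hcb : c ≠ b := by rintro rfl; exact mul_ne_zero h2 h3 (h.eta_mul_eta_swap hq2 c d)
  by_cases hab : a = b
  · subst hab
    refine hq3 ((mul_eq_right₀ (h.alpha_ne_zero a)).mp ?_)
    linear_combination -h.alpha_eq_mul a c h1 - q * h.alpha_eq_mul c d h2 -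
      q ^ 2 * h.alpha_eq_mul d a h3
  · exact mul_ne_zero h1 h3 (h.eta_mul_eta_eq_zero hq2 hpa hac had hab hcd hcb hdb)

lemma matrix_of_pow_three_eq_zero (h : WeightRelations p q α η) [Fintype ι] [DecidableEq ι]
    (hq1 : q ≠ 1) (hq2 : q ^ 2 ≠ 1) (hq3 : q ^ 3 ≠ 1) (hpa : ∀ i j, p i j * p j i = 1) :
    Matrix.of η ^ 3 = 0 := by
  ext a b
  simp only [pow_three, Matrix.mul_apply, Matrix.of_apply, Finset.mul_sum, Matrix.zero_apply]
  exact Finset.sum_eq_zero fun c _ => Finset.sum_eq_zero fun d _ =>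
    h.eta_mul_eta_mul_eta hq1 hq2 hq3 hpa a c d b

end WeightRelations

namespace KRAction

variable {k : Type} [Field k] {t : ℕ} {p : Fin t → Fin t → k} {G : Type} [Group G] {g : G}
  {χ : G →* k} {gam : k} (T : KRAction k G g χ gam (QAS k p)) {α : Fin t → k}
  {η : Fin t → Fin t → k}

lemma alpha_ne_zero (hp1 : ∀ i, p i i = 1) (hpa : ∀ i j, p i j * p j i = 1)
    (hdiag : ∀ i, T.ρ g (QAS.u k p i) = α i • QAS.u k p i) (i : Fin t) : α i ≠ 0 := by
  intro h
  have hu := hdiag i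
  rw [h, zero_smul, map_eq_zero_iff _ (T.ρ g).injective] at hu
  exact (QAS.linearIndependent_u p hp1 hpa).ne_zero i hu

lemma alpha_eq_mul_of_eta_ne_zero (hp1 : ∀ i, p i i = 1) (hpa : ∀ i j, p i j * p j i = 1)
    (hdiag : ∀ i, T.ρ g (QAS.u k p i) = α i • QAS.u k p i)
    (hη : ∀ j, T.x (QAS.u k p j) = ∑ i, η i j • QAS.u k p i) {i j : Fin t} (hne : η i j ≠ 0) :
    α i = χ g * α j := by
  have h := T.comm g (QAS.u k p j)
  rw [hη, hdiag, map_smul, hη, map_sum] at h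
  simp only [map_smul, hdiag, smul_smul, Finset.smul_sum] at h
  have := Fintype.linearIndependent_iffₛ.mp (QAS.linearIndependent_u p hp1 hpa) _ _ h i
  exact mul_left_cancel₀ hne (by linear_combination this)

lemma x_u_mul_u (hdiag : ∀ i, T.ρ g (QAS.u k p i) = α i • QAS.u k p i) (i j : Fin t) :
    α i • (QAS.u k p i * T.x (QAS.u k p j)) + T.x (QAS.u k p i) * QAS.u k p j =
      p i j • (α j • (QAS.u k p j * T.x (QAS.u k p i)) + T.x (QAS.u k p j) * QAS.u k p i) := by
  have h := congrArg T.x (QAS.u_mul_u p i j)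
  rwa [map_smul, T.skew, T.skew, hdiag, hdiag, smul_mul_assoc, smul_mul_assoc] at h

open MvPolynomial in
lemma coeff_x_u_mul_u (hp1 : ∀ i, p i i = 1) (hpa : ∀ i j, p i j * p j i = 1)
    (hdiag : ∀ i, T.ρ g (QAS.u k p i) = α i • QAS.u k p i)
    (hη : ∀ j, T.x (QAS.u k p j) = ∑ i, η i j • QAS.u k p i) (i j : Fin t) (s : Fin t →₀ ℕ) :
    α i * ∑ l, η l j * QAS.twistFactor p i l * coeff s (X i * X l) +
        ∑ l, η l i * QAS.twistFactor p l j * coeff s (X l * X j) =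
      p i j * (α j * ∑ l, η l i * QAS.twistFactor p j l * coeff s (X j * X l) +
        ∑ l, η l j * QAS.twistFactor p l i * coeff s (X l * X i)) := by
  have h := congrArg (lcoeff k s ∘ₗ QAS.toMvPolynomial p hp1 hpa) (T.x_u_mul_u hdiag i j)
  simpa [hη, Finset.mul_sum, Finset.sum_mul, QAS.toMvPolynomial_u_mul_u, coeff_sum, coeff_C_mul,
    mul_add, mul_assoc] using h

lemma alpha_eq_of_eta_ne_zero (hp1 : ∀ i, p i i = 1) (hpa : ∀ i j, p i j * p j i = 1)
    (hdiag : ∀ i, T.ρ g (QAS.u k p i) = α i • QAS.u k p i)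
    (hη : ∀ j, T.x (QAS.u k p j) = ∑ i, η i j • QAS.u k p i) {i j : Fin t} (hij : i ≠ j)
    (hne : η i j ≠ 0) : α i = p i j := by
  classical
  have h := T.coeff_x_u_mul_u hp1 hpa hdiag hη i j (Finsupp.single i 1 + Finsupp.single i 1)
  simpa [MvPolynomial.coeff_X_mul_X, hij.symm, hne] using h

lemma mul_alpha_eq_of_eta_ne_zero (hp1 : ∀ i, p i i = 1) (hpa : ∀ i j, p i j * p j i = 1)
    (hdiag : ∀ i, T.ρ g (QAS.u k p i) = α i • QAS.u k p i)
    (hη : ∀ j, T.x (QAS.u k p j) = ∑ i, η i j • QAS.u k p i) {a b c : Fin t} (hab : a ≠ b)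
    (hac : a ≠ c) (hbc : b ≠ c) (hne : η c a ≠ 0) : p a b * α b = p c b := by
  classical
  have h := T.coeff_x_u_mul_u hp1 hpa hdiag hη a b (Finsupp.single c 1 + Finsupp.single b 1)
  simp only [MvPolynomial.coeff_X_mul_X, hab, hac, hbc, false_and, and_false, true_and, and_true,
    or_self, false_or, or_false, ↓reduceIte, mul_zero, mul_ite, mul_one, Finset.sum_const_zero,
    Finset.sum_ite_eq', Finset.mem_univ, zero_add, add_zero] at h
  rw [QAS.twistFactor_eq_mul p hp1 hpa c b] at h
  refine mul_left_cancel₀ (mul_ne_zero hne (QAS.twistFactor_ne_zero p hpa b c)) ?_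
  linear_combination -h

lemma weightRelations (hp1 : ∀ i, p i i = 1) (hpa : ∀ i j, p i j * p j i = 1)
    (hdiag : ∀ i, T.ρ g (QAS.u k p i) = α i • QAS.u k p i)
    (hη : ∀ j, T.x (QAS.u k p j) = ∑ i, η i j • QAS.u k p i) :
    WeightRelations p (χ g) α η where
  alpha_ne_zero := T.alpha_ne_zero hp1 hpa hdiag
  alpha_eq_mul _ _ := T.alpha_eq_mul_of_eta_ne_zero hp1 hpa hdiag hη
  alpha_eq _ _ := T.alpha_eq_of_eta_ne_zero hp1 hpa hdiag hη
  mul_alpha_eq _ _ _ := T.mul_alpha_eq_of_eta_ne_zero hp1 hpa hdiag hη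

lemma gam_eq_zero_or_orderOf_eq (hinj : Function.Injective T.ρ)
    (hx : ∀ j, (T.x ^ orderOf (χ g)) (QAS.u k p j) = 0) :
    gam = 0 ∨ orderOf g = orderOf (χ g) := by
  set m := orderOf (χ g)
  refine or_iff_not_imp_left.mpr fun hgam => ?_
  have hfix : ∀ j, T.ρ (g ^ m) (QAS.u k p j) = QAS.u k p j := by
    intro j
    have h := LinearMap.congr_fun T.x_pow (QAS.u k p j)
    rw [hx, LinearMap.smul_apply, LinearMap.sub_apply, AlgEquiv.toLinearMap_apply,
      LinearMap.id_apply, eq_comm, smul_eq_zero] at h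
    exact sub_eq_zero.mp (h.resolve_left hgam)
  have hone : T.ρ (g ^ m) = 1 :=
    AlgEquiv.coe_toAlgHom_injective (QAS.algHom_ext p (f' := AlgHom.id k _) hfix)
  exact Nat.dvd_antisymm (orderOf_dvd_of_pow_eq_one (hinj (hone.trans (map_one _).symm)))
    (orderOf_map_dvd χ g)

end KRAction

theorem stmt_4_general {k : Type} [Field k] {t : ℕ}
    (p : Fin t → Fin t → k)
    (hp1 : ∀ i, p i i = 1) (hpa : ∀ i j, p i j * p j i = 1)
    (hpord : ∀ i j, i ≠ j → 3 ≤ orderOf (p i j))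
    {G : Type} [Group G] (g : G)
    (χ : G →* k) (gam : k)
    {m : ℕ} (hm : orderOf (χ g) = m) (hm3 : 3 ≤ m)
    (T : KRAction k G g χ gam (QAS k p))
    (hif : T.InnerFaithful)
    (α : Fin t → k) (hdiag : ∀ i, T.ρ g (QAS.u k p i) = α i • QAS.u k p i)
    (η : Fin t → Fin t → k)
    (hη : ∀ j, T.x (QAS.u k p j) = ∑ i, η i j • QAS.u k p i) :
    ((∀ i j, η i j * η j i = 0) ∧ (∀ i, η i i = 0)) ∧
    (∀ (j i i' : Fin t), η i j ≠ 0 → η i' j ≠ 0 → i = i') ∧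
    (∀ (i j j' : Fin t), η i j ≠ 0 → η i j' ≠ 0 → j = j') ∧
    (3 < t → ∀ i j l r : Fin t, i ≠ j → i ≠ l → i ≠ r → j ≠ l → j ≠ r → l ≠ r →
      η i j * η l r = 0) ∧
    (m ≠ 3 → IsNilpotent (Matrix.of fun i j => η i j)) ∧
    ((orderOf g = m ∨ (t ≤ m ∧ m ≠ 3)) → (gam = 0 ∨ orderOf g = m)) := by
  subst hm
  have hq0 : χ g ≠ 0 := left_ne_zero_of_mul_eq_one (by rw [← map_mul, mul_inv_cancel, map_one])
  have hq1 : χ g ≠ 1 := by simpa using pow_ne_one_of_lt_orderOf one_ne_zero (by omega : 1 < _)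
  have hq2 : χ g ^ 2 ≠ 1 := pow_ne_one_of_lt_orderOf two_ne_zero (by omega)
  have hp2 : ∀ i j, i ≠ j → p i j ^ 2 ≠ 1 := fun i j hij =>
    pow_ne_one_of_lt_orderOf two_ne_zero (by have := hpord i j hij; omega)
  have hp : ∀ i j, i ≠ j → p i j ≠ 1 := fun i j hij h1 => hp2 i j hij (by rw [h1, one_pow])
  have hw := T.weightRelations hp1 hpa hdiag hη
  have hcube : orderOf (χ g) ≠ 3 → Matrix.of η ^ 3 = 0 := fun h3 =>
    hw.matrix_of_pow_three_eq_zero hq1 hq2 (pow_ne_one_of_lt_orderOf three_ne_zero (by omega)) hpa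
  refine ⟨⟨hw.eta_mul_eta_swap hq2, hw.eta_self hq1⟩,
    fun _ _ _ h1 h2 => hw.leftUnique hq1 hpa hp h1 h2,
    fun _ _ _ h1 h2 => hw.rightUnique hq0 hq1 hpa hp2 h1 h2,
    fun _ _ _ _ _ => hw.eta_mul_eta_eq_zero hq2 hpa, fun h3 => ⟨3, hcube h3⟩, ?_⟩
  rintro (h | ⟨-, h3⟩)
  · exact .inr h
  refine T.gam_eq_zero_or_orderOf_eq hif.2 fun j => ?_
  rw [Module.End.pow_apply_eq_sum_matrix_pow T.x _ (Matrix.of η) hη, ← Nat.add_sub_cancel' hm3,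
    pow_add, hcube h3, zero_mul]
  simp

/-- Suppose `H(G,g,χ,γ)` acts linearly and inner faithfully on the quantum
affine space `A = k_p[u_1,…,u_t]`, where `m := ord(χ(g))`, `t`, and `ord(p_{ij})` for all
`i ≠ j` are all at least `3`, and where `g` acts diagonally, `g·u_i = α_i u_i`; write
`x·u_j = Σ_i η_{ij} u_i`.  Then:
(1) `η_{ij} η_{ji} = 0` for all `i,j`, in particular `η_{kk} = 0` for all `k`;
(2) each column of the matrix `(η_{ij})` has at most one nonzero entry;
(3) each row of `(η_{ij})` has at most one nonzero entry;
(4) if `t > 3` and `i,j,k,ℓ` are all distinct, then `η_{ij} η_{kℓ} = 0`;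
(5) if `m ≠ 3`, then the matrix `(η_{ij})` is nilpotent;
(6) if `ord(g) = m`, or if `t ≤ m` and `m ≠ 3`, then `γ = 0` (i.e. the acting Hopf
    algebra is `H(G,g,χ,0)`; in the degenerate case `ord(g) = m` the relation
    `x^m = γ(g^m-1)` already reads `x^m = 0`). -/
theorem stmt_4 {k : Type} [Field k] {t : ℕ} (ht : 3 ≤ t)
    (p : Fin t → Fin t → k)
    (hp1 : ∀ i, p i i = 1) (hpa : ∀ i j, p i j * p j i = 1)
    (hpord : ∀ i j, i ≠ j → 3 ≤ orderOf (p i j))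
    {G : Type} [Group G] [Fintype G] (g : G) (hgc : g ∈ Subgroup.center G)
    (χ : G →* k) (gam : k)
    {m : ℕ} (hm : orderOf (χ g) = m) (hm3 : 3 ≤ m)
    (T : KRAction k G g χ gam (QAS k p))
    (hlinG : ∀ (h : G), ∀ a ∈ Submodule.span k (Set.range (QAS.u k p)),
      T.ρ h a ∈ Submodule.span k (Set.range (QAS.u k p)))
    (hlinx : ∀ a ∈ Submodule.span k (Set.range (QAS.u k p)),
      T.x a ∈ Submodule.span k (Set.range (QAS.u k p)))
    (hif : T.InnerFaithful)
    (α : Fin t → k) (hdiag : ∀ i, T.ρ g (QAS.u k p i) = α i • QAS.u k p i)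
    (η : Fin t → Fin t → k)
    (hη : ∀ j, T.x (QAS.u k p j) = ∑ i, η i j • QAS.u k p i) :
    ((∀ i j, η i j * η j i = 0) ∧ (∀ i, η i i = 0)) ∧
    (∀ (j i i' : Fin t), η i j ≠ 0 → η i' j ≠ 0 → i = i') ∧
    (∀ (i j j' : Fin t), η i j ≠ 0 → η i j' ≠ 0 → j = j') ∧
    (3 < t → ∀ i j l r : Fin t, i ≠ j → i ≠ l → i ≠ r → j ≠ l → j ≠ r → l ≠ r →
      η i j * η l r = 0) ∧
    (m ≠ 3 → IsNilpotent (Matrix.of fun i j => η i j)) ∧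
    ((orderOf g = m ∨ (t ≤ m ∧ m ≠ 3)) → (gam = 0 ∨ orderOf g = m)) :=
  stmt_4_general p hp1 hpa hpord g χ gam hm hm3 T hif α hdiag η hη
end

section
/- Let q ∈ k^× with q ≠ ±1 and let m ≥ 3. If the generalized Taft algebra T_n(λ,m,0) acts on O_q(M_2(k)) with x acting linearly and nonzero, and with g acting as an element of the group H ⋊ ⟨τ⟩ of graded automorphisms, then g must act as an element of H, i.e. diagonally on the basis (A, B, C, D) of the degree-one part of O_q(M_2(k)). -/
/-- The images of the generators `Y_{ij}` in the free algebra. -/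
def YY (k : Type) [Field k] (N : ℕ) (i j : Fin N) : FreeAlgebra k (Fin N × Fin N) :=
  FreeAlgebra.ι k (i, j)

/-- The defining relations of the single parameter quantum matrix algebra
`O_q(M_N(k))`. -/
inductive QMatRel (k : Type) [Field k] (q : k) (N : ℕ) :
    FreeAlgebra k (Fin N × Fin N) → FreeAlgebra k (Fin N × Fin N) → Prop
  | row (i : Fin N) {j m : Fin N} (h : j < m) :
      QMatRel k q N (YY k N i j * YY k N i m) (q • (YY k N i m * YY k N i j))
  | col (j : Fin N) {i l : Fin N} (h : i < l) :
      QMatRel k q N (YY k N i j * YY k N l j) (q • (YY k N l j * YY k N i j))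
  | anti {i l j m : Fin N} (h1 : i < l) (h2 : m < j) :
      QMatRel k q N (YY k N i j * YY k N l m) (YY k N l m * YY k N i j)
  | diag {i l j m : Fin N} (h1 : i < l) (h2 : j < m) :
      QMatRel k q N (YY k N i j * YY k N l m)
        (YY k N l m * YY k N i j + (q - q⁻¹) • (YY k N i m * YY k N l j))

/-- The single parameter quantum matrix algebra `O_q(M_N(k))`. -/
abbrev QMat (k : Type) [Field k] (q : k) (N : ℕ) : Type := RingQuot (QMatRel k q N)

/-- The generators `Y_{ij}` of `O_q(M_N(k))`. -/
noncomputable def QMat.Y (k : Type) [Field k] (q : k) (N : ℕ) (i j : Fin N) : QMat k q N :=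
  RingQuot.mkAlgHom k (QMatRel k q N) (YY k N i j)

/-- The degree-one part of `O_q(M_N(k))`, i.e. the span of the generators `Y_{ij}`. -/
noncomputable def QMat.V (k : Type) [Field k] (q : k) (N : ℕ) : Submodule k (QMat k q N) :=
  Submodule.span k (Set.range fun ij : Fin N × Fin N => QMat.Y k q N ij.1 ij.2)

/-- A `k`-algebra automorphism of `O_q(M_N(k))` acts as an element of the group
`H ⋊ ⟨τ⟩`, where `H = (kˣ)^{2N-1}` consists of the diagonal automorphisms
`Y_{ij} ↦ α_{ij} Y_{ij}` for a rank-one matrix `(α_{ij}) = (a_i b_j)` with no zero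
entries, and `τ` is the transposition automorphism `Y_{ij} ↦ Y_{ji}`. -/
def ActsAsHTau (k : Type) [Field k] (q : k) (N : ℕ)
    (g : QMat k q N ≃ₐ[k] QMat k q N) : Prop :=
  ∃ a b : Fin N → k, (∀ i, a i ≠ 0) ∧ (∀ j, b j ≠ 0) ∧
    ((∀ i j, g (QMat.Y k q N i j) = (a i * b j) • QMat.Y k q N i j) ∨
     (∀ i j, g (QMat.Y k q N i j) = (a i * b j) • QMat.Y k q N j i))
/-!
Suppose `g` acts by a transposition-type automorphism `Y_{ij} ↦ a_i b_j Y_{ji}` and write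
`x(Y_{ij}) = ∑ c_{ij}(p) Y_p`. Comparing coefficients in `g x = λ x g` gives
`c_{ij}(pᵀ) α_{pᵀ} = λ α_{ij} c_{ji}(p)` with `α_{ij} = a_i b_j`; applied twice, it kills
`c_{ij}(p)` for `p ∈ {(i,j), (j,i)}` because `λ² ≠ 1`. The other coefficients are read off the
degree-two parts of the skew-derivation identities for `AB = qBA`, `CD = qDC` and `BC = CB`:
a surviving one would force `a₀b₀ = q`, `q a₁b₁ = 1` and `a₀b₁ · a₁b₀ = q^{±2}`, against
`a₀b₀ · a₁b₁ = a₀b₁ · a₁b₀` and `q² ≠ 1`. So `x` vanishes on the generators, hence everywhere.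

To compare coefficients of degree-two elements of `O_q(M₂(k))` without a PBW basis, we map it in
two ways to operators on the quantum affine space `k_q[x₁, x₂, x₃]` (with `x₁x₂ = q x₂x₁`,
`x₂x₃ = q x₃x₂`, `x₁x₃ = x₃x₁`) and evaluate at `1`.
-/

section SkewDerivation

variable {k A : Type} [CommSemiring k] [Ring A] [Algebra k A] {σ : A →ₐ[k] A}
  {x : Module.End k A}

theorem skew_eq_of_mul_eq (hx : ∀ u v, x (u * v) = σ u * x v + x u * v) {u v : A} {s : k}
    (h : u * v = s • (v * u)) : σ u * x v + x u * v = s • (σ v * x u + x v * u) := by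
  rw [← hx, ← hx, ← map_smul, h]

theorem eq_zero_of_adjoin_eq_top (hx : ∀ u v, x (u * v) = σ u * x v + x u * v) {s : Set A}
    (hs : Algebra.adjoin k s = ⊤) (h : ∀ u ∈ s, x u = 0) : x = 0 := by
  have one : x 1 = 0 := by simpa using hx 1 1
  ext u
  induction (hs ▸ Algebra.mem_top : u ∈ Algebra.adjoin k s) using Algebra.adjoin_induction with
  | mem u hu => exact h u hu
  | algebraMap r => rw [Algebra.algebraMap_eq_smul_one, map_smul, one, smul_zero]; rfl
  | add u v _ _ hu hv => simp_all
  | mul u v _ _ hu hv => simp_all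

end SkewDerivation

theorem eq_zero_and_eq_zero_of_relations {k : Type} [Field k] {α β γ δ q r u v : k}
    (hαδ : α * δ = β * γ) (hr0 : r ≠ 0) (hr : r ^ 2 ≠ 1) (hu : α * u = q * u)
    (hv : q * δ * v = v) (h₁ : β * v + r * u = 0) (h₂ : γ * u + r * v = 0) :
    u = 0 ∧ v = 0 := by
  suffices hu0 : u = 0 from ⟨hu0, by simpa [hu0, hr0] using h₂⟩
  by_contra hu0
  have hv0 : v ≠ 0 := fun hv0 => hu0 (by simpa [hv0, hr0] using h₁)
  have hα : α = q := mul_right_cancel₀ hu0 hu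
  have hδ : q * δ = 1 := mul_right_cancel₀ hv0 (by rwa [one_mul])
  have hβγ : (β * γ - r ^ 2) * (u * v) = 0 := by linear_combination γ * u * h₁ - r * u * h₂
  have : β * γ = r ^ 2 := by simpa [sub_eq_zero, hu0, hv0] using hβγ
  exact hr (by rw [← this, ← hαδ, hα, hδ])

namespace QAffineSpace

/-! `Finsupp.single (a, b, c) 1` stands for the monomial `x₁ᵃ x₂ᵇ x₃ᶜ`, and `X₁, X₂, X₃` are left
multiplication by `x₁, x₂, x₃`. -/

variable {k : Type} [Field k] (q : k)

noncomputable def X₁ : Module.End k ((ℕ × ℕ × ℕ) →₀ k) :=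
  Finsupp.linearCombination k fun p => Finsupp.single (p.1 + 1, p.2.1, p.2.2) 1

noncomputable def X₂ : Module.End k ((ℕ × ℕ × ℕ) →₀ k) :=
  Finsupp.linearCombination k fun p => Finsupp.single (p.1, p.2.1 + 1, p.2.2) (q⁻¹ ^ p.1)

noncomputable def X₃ : Module.End k ((ℕ × ℕ × ℕ) →₀ k) :=
  Finsupp.linearCombination k fun p => Finsupp.single (p.1, p.2.1, p.2.2 + 1) (q⁻¹ ^ p.2.1)

noncomputable def linearMul (u₁ u₂ u₃ : k) : Module.End k ((ℕ × ℕ × ℕ) →₀ k) :=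
  u₁ • X₁ + u₂ • X₂ q + u₃ • X₃ q

variable {q}

@[simp] theorem X₁_single (a b c : ℕ) (t : k) :
    X₁ (Finsupp.single (a, b, c) t) = Finsupp.single (a + 1, b, c) t := by
  simp [X₁]

@[simp] theorem X₂_single (a b c : ℕ) (t : k) :
    X₂ q (Finsupp.single (a, b, c) t) = Finsupp.single (a, b + 1, c) (q⁻¹ ^ a * t) := by
  simp [X₂, mul_comm]

@[simp] theorem X₃_single (a b c : ℕ) (t : k) :
    X₃ q (Finsupp.single (a, b, c) t) = Finsupp.single (a, b, c + 1) (q⁻¹ ^ b * t) := by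
  simp [X₃, mul_comm]

theorem X₁_mul_X₂ (hq : q ≠ 0) : X₁ * X₂ q = q • (X₂ q * X₁) := by
  ext ⟨a, b, c⟩ : 2
  simp only [Module.End.mul_apply, LinearMap.smul_apply, Finsupp.lsingle_apply,
    LinearMap.comp_apply, X₁_single, X₂_single, Finsupp.smul_single]
  rw [pow_succ, smul_eq_mul, mul_one, mul_one, mul_left_comm, mul_inv_cancel₀ hq, mul_one]

theorem X₂_mul_X₃ (hq : q ≠ 0) : X₂ q * X₃ q = q • (X₃ q * X₂ q) := by
  ext ⟨a, b, c⟩ : 2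
  simp only [Module.End.mul_apply, LinearMap.smul_apply, Finsupp.lsingle_apply,
    LinearMap.comp_apply, X₂_single, X₃_single, Finsupp.smul_single]
  rw [pow_succ, smul_eq_mul, mul_one, mul_one]
  field_simp

theorem X₁_mul_X₃ : X₁ * X₃ q = X₃ q * X₁ := by
  ext ⟨a, b, c⟩ : 2
  simp

theorem linearMul_apply_single_zero (u₁ u₂ u₃ : k) :
    linearMul q u₁ u₂ u₃ (Finsupp.single 0 1) =
      Finsupp.single (1, 0, 0) u₁ + Finsupp.single (0, 1, 0) u₂ + Finsupp.single (0, 0, 1) u₃ := by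
  simp [linearMul, show (0 : ℕ × ℕ × ℕ) = (0, 0, 0) from rfl, Finsupp.smul_single]

theorem linearMul_mul_linearMul_apply_single_zero (u₁ u₂ u₃ v₁ v₂ v₃ : k) :
    (linearMul q u₁ u₂ u₃ * linearMul q v₁ v₂ v₃) (Finsupp.single 0 1) =
      Finsupp.single (2, 0, 0) (u₁ * v₁) + Finsupp.single (1, 1, 0) (u₁ * v₂ + q⁻¹ * u₂ * v₁) +
      Finsupp.single (1, 0, 1) (u₁ * v₃ + u₃ * v₁) + Finsupp.single (0, 2, 0) (u₂ * v₂) +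
      Finsupp.single (0, 1, 1) (u₂ * v₃ + q⁻¹ * u₃ * v₂) + Finsupp.single (0, 0, 2) (u₃ * v₃) := by
  rw [Module.End.mul_apply, linearMul_apply_single_zero]
  simp only [linearMul, map_add, LinearMap.add_apply, LinearMap.smul_apply, X₁_single, X₂_single,
    X₃_single, Finsupp.smul_single, Finsupp.single_add, smul_eq_mul, pow_zero, pow_one]
  ring_nf
  abel

end QAffineSpace

namespace QMat

open QAffineSpace

variable {k : Type} [Field k] {q : k}

theorem adjoin_range_Y (N : ℕ) :
    Algebra.adjoin k (Set.range fun ij : Fin N × Fin N => Y k q N ij.1 ij.2) = ⊤ := by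
  have h : (Set.range fun ij : Fin N × Fin N => Y k q N ij.1 ij.2) =
      RingQuot.mkAlgHom k (QMatRel k q N) '' Set.range (FreeAlgebra.ι k) := by
    rw [← Set.range_comp]; rfl
  rw [h, ← AlgHom.map_adjoin, FreeAlgebra.adjoin_range_ι, Algebra.map_top,
    AlgHom.range_eq_top]
  exact RingQuot.mkAlgHom_surjective k _

theorem Y_mul_Y_row {N : ℕ} (i : Fin N) {j m : Fin N} (h : j < m) :
    Y k q N i j * Y k q N i m = q • (Y k q N i m * Y k q N i j) := by
  simpa only [Y, map_mul, map_smul] using RingQuot.mkAlgHom_rel k (QMatRel.row (q := q) i h)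

theorem Y_mul_Y_anti {N : ℕ} {i l j m : Fin N} (h₁ : i < l) (h₂ : m < j) :
    Y k q N i j * Y k q N l m = Y k q N l m * Y k q N i j := by
  simpa only [Y, map_mul] using RingQuot.mkAlgHom_rel k (QMatRel.anti (q := q) h₁ h₂)

section Lift

variable {R : Type} [Ring R] [Algebra k R] (A B C D : R) (hAB : A * B = q • (B * A))
  (hCD : C * D = q • (D * C)) (hAC : A * C = q • (C * A)) (hBD : B * D = q • (D * B))
  (hBC : B * C = C * B) (hAD : A * D = D * A + (q - q⁻¹) • (B * C))

noncomputable def lift : QMat k q 2 →ₐ[k] R :=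
  RingQuot.liftAlgHom k ⟨FreeAlgebra.lift k fun ij => !![A, B; C, D] ij.1 ij.2, by
    have eq_of_lt : ∀ {j m : Fin 2}, j < m → j = 0 ∧ m = 1 := by omega
    intro u v h
    induction h with
    | row i h =>
      obtain ⟨rfl, rfl⟩ := eq_of_lt h
      fin_cases i <;> simpa [YY]
    | col j h =>
      obtain ⟨rfl, rfl⟩ := eq_of_lt h
      fin_cases j <;> simpa [YY]
    | anti h₁ h₂ =>
      obtain ⟨rfl, rfl⟩ := eq_of_lt h₁
      obtain ⟨rfl, rfl⟩ := eq_of_lt h₂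
      simpa [YY]
    | diag h₁ h₂ =>
      obtain ⟨rfl, rfl⟩ := eq_of_lt h₁
      obtain ⟨rfl, rfl⟩ := eq_of_lt h₂
      simpa [YY]⟩

theorem lift_Y (i j : Fin 2) :
    lift A B C D hAB hCD hAC hBD hBC hAD (Y k q 2 i j) = !![A, B; C, D] i j := by
  simp [lift, Y, YY]

end Lift

/- Neither representation is faithful, but together they separate the degree-one monomials and
the degree-two monomials needed below. -/

noncomputable def ρ₁ (hq : q ≠ 0) : QMat k q 2 →ₐ[k] Module.End k ((ℕ × ℕ × ℕ) →₀ k) :=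
  lift X₁ 0 (X₂ q) (X₃ q) (by simp) (X₂_mul_X₃ hq) (X₁_mul_X₂ hq) (by simp) (by simp)
    (by simp [X₁_mul_X₃])

noncomputable def ρ₂ (hq : q ≠ 0) : QMat k q 2 →ₐ[k] Module.End k ((ℕ × ℕ × ℕ) →₀ k) :=
  lift X₁ (X₂ q) 0 (X₃ q) (X₁_mul_X₂ hq) (by simp) (by simp) (X₂_mul_X₃ hq) (by simp)
    (by simp [X₁_mul_X₃])

section Representations

variable (hq : q ≠ 0)

theorem ρ₁_Y (i j : Fin 2) :
    ρ₁ hq (Y k q 2 i j) =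
      !![linearMul q 1 0 0, linearMul q 0 0 0; linearMul q 0 1 0, linearMul q 0 0 1] i j := by
  rw [ρ₁, lift_Y]
  fin_cases i <;> fin_cases j <;> simp [linearMul]

theorem ρ₂_Y (i j : Fin 2) :
    ρ₂ hq (Y k q 2 i j) =
      !![linearMul q 1 0 0, linearMul q 0 1 0; linearMul q 0 0 0, linearMul q 0 0 1] i j := by
  rw [ρ₂, lift_Y]
  fin_cases i <;> fin_cases j <;> simp [linearMul]

theorem ρ₁_sum (c : Fin 2 × Fin 2 → k) :
    ρ₁ hq (∑ p, c p • Y k q 2 p.1 p.2) = linearMul q (c (0, 0)) (c (1, 0)) (c (1, 1)) := by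
  simp [Fintype.sum_prod_type, ρ₁_Y, linearMul, add_assoc]

theorem ρ₂_sum (c : Fin 2 × Fin 2 → k) :
    ρ₂ hq (∑ p, c p • Y k q 2 p.1 p.2) = linearMul q (c (0, 0)) (c (0, 1)) (c (1, 1)) := by
  simp [Fintype.sum_prod_type, ρ₂_Y, linearMul]

end Representations

theorem linearIndependent_Y (hq : q ≠ 0) :
    LinearIndependent k fun p : Fin 2 × Fin 2 => Y k q 2 p.1 p.2 := by
  rw [Fintype.linearIndependent_iff]
  intro c hc
  have h₁ := congr(ρ₁ hq $hc (Finsupp.single 0 1))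
  have h₂ := congr(ρ₂ hq $hc (Finsupp.single 0 1))
  rw [ρ₁_sum, linearMul_apply_single_zero] at h₁
  rw [ρ₂_sum, linearMul_apply_single_zero] at h₂
  rintro ⟨i, j⟩
  fin_cases i <;> fin_cases j
  · simpa using congr($h₁ (1, 0, 0))
  · simpa using congr($h₂ (0, 1, 0))
  · simpa using congr($h₁ (0, 1, 0))
  · simpa using congr($h₁ (0, 0, 1))

section TransposeType

variable {k : Type} [Field k] {q lam : k} {g : QMat k q 2 →ₐ[k] QMat k q 2}
  {x : Module.End k (QMat k q 2)} {a b : Fin 2 → k} {c : Fin 2 → Fin 2 → Fin 2 × Fin 2 → k}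

theorem coeff_of_comm (hq : q ≠ 0) (hg : ∀ i j, g (Y k q 2 i j) = (a i * b j) • Y k q 2 j i)
    (hx : ∀ i j, x (Y k q 2 i j) = ∑ p, c i j p • Y k q 2 p.1 p.2)
    (hcomm : ∀ u, g (x u) = lam • x (g u)) (i j : Fin 2) (p : Fin 2 × Fin 2) :
    c i j p.swap * (a p.2 * b p.1) = lam * (a i * b j) * c j i p := by
  have h := hcomm (Y k q 2 i j)
  rw [hg, map_smul, hx, hx, map_sum, Finset.smul_sum, Finset.smul_sum] at h
  simp only [map_smul, hg, smul_smul] at h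
  rw [← (Equiv.prodComm _ _).sum_comp] at h
  rw [mul_assoc]
  exact (Fintype.linearIndependent_iffₛ.1 (linearIndependent_Y hq) _ _ h) p

theorem coeffs_of_skew_AB (hq : q ≠ 0) (ha : ∀ i, a i ≠ 0) (hb : ∀ j, b j ≠ 0)
    (hg : ∀ i j, g (Y k q 2 i j) = (a i * b j) • Y k q 2 j i)
    (hx : ∀ i j, x (Y k q 2 i j) = ∑ p, c i j p • Y k q 2 p.1 p.2)
    (hskew : ∀ u v, x (u * v) = g u * x v + x u * v) :
    a 0 * b 0 * c 0 1 (0, 0) = q * c 0 1 (0, 0) ∧ a 0 * b 0 * c 0 1 (1, 1) = q * c 0 1 (1, 1) ∧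
      c 0 0 (0, 1) = 0 ∧ c 0 0 (1, 0) = 0 ∧ c 0 0 (1, 1) = 0 := by
  have E := skew_eq_of_mul_eq hskew (Y_mul_Y_row (k := k) (q := q) (0 : Fin 2) Fin.zero_lt_one)
  rw [hg, hg, hx, hx] at E
  have E₁ := congr(ρ₁ hq $E (Finsupp.single 0 1))
  have E₂ := congr(ρ₂ hq $E (Finsupp.single 0 1))
  simp only [map_add, map_smul, map_mul, ρ₁_Y, ρ₁_sum, ρ₂_Y, ρ₂_sum, LinearMap.add_apply,
    Matrix.of_apply, Matrix.cons_val_zero, Matrix.cons_val_one, smul_mul_assoc,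
    LinearMap.smul_apply, linearMul_mul_linearMul_apply_single_zero] at E₁ E₂
  refine ⟨?_, ?_, ?_, ?_, ?_⟩
  · have h := congr($E₁ (2, 0, 0))
    simp [-mul_eq_mul_right_iff] at h
    linear_combination h
  · have h := congr($E₁ (1, 0, 1))
    simp [-mul_eq_mul_right_iff] at h
    linear_combination h
  · simpa using congr($E₂ (0, 2, 0))
  · simpa [hq, ha, hb] using congr($E₁ (0, 2, 0))
  · simpa [hq, ha, hb] using congr($E₁ (0, 1, 1))

theorem coeffs_of_skew_CD (hq : q ≠ 0) (ha : ∀ i, a i ≠ 0) (hb : ∀ j, b j ≠ 0)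
    (hg : ∀ i j, g (Y k q 2 i j) = (a i * b j) • Y k q 2 j i)
    (hx : ∀ i j, x (Y k q 2 i j) = ∑ p, c i j p • Y k q 2 p.1 p.2)
    (hskew : ∀ u v, x (u * v) = g u * x v + x u * v) :
    q * (a 1 * b 1) * c 1 0 (0, 0) = c 1 0 (0, 0) ∧ q * (a 1 * b 1) * c 1 0 (1, 1) = c 1 0 (1, 1) ∧
      c 1 1 (0, 0) = 0 ∧ c 1 1 (0, 1) = 0 ∧ c 1 1 (1, 0) = 0 := by
  have E := skew_eq_of_mul_eq hskew (Y_mul_Y_row (k := k) (q := q) (1 : Fin 2) Fin.zero_lt_one)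
  rw [hg, hg, hx, hx] at E
  have E₁ := congr(ρ₁ hq $E (Finsupp.single 0 1))
  have E₂ := congr(ρ₂ hq $E (Finsupp.single 0 1))
  simp only [map_add, map_smul, map_mul, ρ₁_Y, ρ₁_sum, ρ₂_Y, ρ₂_sum, LinearMap.add_apply,
    Matrix.of_apply, Matrix.cons_val_zero, Matrix.cons_val_one, smul_mul_assoc,
    LinearMap.smul_apply, linearMul_mul_linearMul_apply_single_zero] at E₁ E₂
  refine ⟨?_, ?_, ?_, ?_, ?_⟩
  · have h := congr($E₁ (1, 0, 1))
    simp at h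
    linear_combination -h
  · have h := congr($E₁ (0, 0, 2))
    simp at h
    linear_combination -h
  · simpa [hq] using congr($E₁ (1, 1, 0))
  · simpa [ha, hb] using congr($E₂ (0, 2, 0))
  · simpa [hq] using congr($E₁ (0, 2, 0))

theorem coeffs_of_skew_BC (hq : q ≠ 0)
    (hg : ∀ i j, g (Y k q 2 i j) = (a i * b j) • Y k q 2 j i)
    (hx : ∀ i j, x (Y k q 2 i j) = ∑ p, c i j p • Y k q 2 p.1 p.2)
    (hskew : ∀ u v, x (u * v) = g u * x v + x u * v) :
    a 0 * b 1 * c 1 0 (0, 0) + q * c 0 1 (0, 0) = 0 ∧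
      a 1 * b 0 * c 0 1 (0, 0) + q * c 1 0 (0, 0) = 0 ∧
      a 0 * b 1 * c 1 0 (1, 1) + q⁻¹ * c 0 1 (1, 1) = 0 ∧
      a 1 * b 0 * c 0 1 (1, 1) + q⁻¹ * c 1 0 (1, 1) = 0 := by
  have E := skew_eq_of_mul_eq hskew
    ((Y_mul_Y_anti (k := k) (q := q) (N := 2) Fin.zero_lt_one Fin.zero_lt_one).trans
      (one_smul k _).symm)
  rw [hg, hg, hx, hx, one_smul] at E
  have E₁ := congr(ρ₁ hq $E (Finsupp.single 0 1))
  have E₂ := congr(ρ₂ hq $E (Finsupp.single 0 1))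
  simp only [map_add, map_smul, map_mul, ρ₁_Y, ρ₁_sum, ρ₂_Y, ρ₂_sum, LinearMap.add_apply,
    Matrix.of_apply, Matrix.cons_val_zero, Matrix.cons_val_one, smul_mul_assoc,
    LinearMap.smul_apply, linearMul_mul_linearMul_apply_single_zero] at E₁ E₂
  refine ⟨?_, ?_, ?_, ?_⟩
  · have h := congr($E₁ (1, 1, 0))
    simp at h
    linear_combination q * h - a 0 * b 1 * c 1 0 (0, 0) * mul_inv_cancel₀ hq
  · have h := congr($E₂ (1, 1, 0))
    simp at h
    linear_combination -q * h - a 1 * b 0 * c 0 1 (0, 0) * mul_inv_cancel₀ hq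
  · simpa using congr($E₁ (0, 1, 1))
  · simpa [eq_comm] using congr($E₂ (0, 1, 1))

theorem coeff_self_eq_zero (hq : q ≠ 0) (hlam : lam ^ 2 ≠ 1) (ha : ∀ i, a i ≠ 0)
    (hb : ∀ j, b j ≠ 0) (hg : ∀ i j, g (Y k q 2 i j) = (a i * b j) • Y k q 2 j i)
    (hx : ∀ i j, x (Y k q 2 i j) = ∑ p, c i j p • Y k q 2 p.1 p.2)
    (hcomm : ∀ u, g (x u) = lam • x (g u)) (i j : Fin 2) : c i j (i, j) = 0 := by
  have h₁ := coeff_of_comm hq hg hx hcomm i j (j, i)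
  have h₂ := coeff_of_comm hq hg hx hcomm j i (i, j)
  simp only [Prod.swap_prod_mk] at h₁ h₂
  have hij := mul_ne_zero (ha i) (hb j)
  have hji := mul_ne_zero (ha j) (hb i)
  have h : (1 - lam ^ 2) * (a i * b j * (a j * b i) * c i j (i, j)) = 0 := by
    linear_combination (a j * b i) * h₁ + lam * (a i * b j) * h₂
  simpa [sub_eq_zero, Ne.symm hlam, hij, hji] using h

theorem coeff_transpose_eq_zero (hq : q ≠ 0) (hlam : lam ^ 2 ≠ 1) (ha : ∀ i, a i ≠ 0)
    (hb : ∀ j, b j ≠ 0) (hg : ∀ i j, g (Y k q 2 i j) = (a i * b j) • Y k q 2 j i)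
    (hx : ∀ i j, x (Y k q 2 i j) = ∑ p, c i j p • Y k q 2 p.1 p.2)
    (hcomm : ∀ u, g (x u) = lam • x (g u)) (i j : Fin 2) : c i j (j, i) = 0 := by
  have h₁ := coeff_of_comm hq hg hx hcomm i j (i, j)
  have h₂ := coeff_of_comm hq hg hx hcomm j i (j, i)
  simp only [Prod.swap_prod_mk] at h₁ h₂
  have h : (1 - lam ^ 2) * (a j * b i * c i j (j, i)) = 0 := by
    linear_combination h₁ + lam * h₂
  simpa [sub_eq_zero, Ne.symm hlam, ha, hb] using h

theorem coeffs_Y00_eq_zero (hq : q ≠ 0) (hlam : lam ^ 2 ≠ 1) (ha : ∀ i, a i ≠ 0)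
    (hb : ∀ j, b j ≠ 0) (hg : ∀ i j, g (Y k q 2 i j) = (a i * b j) • Y k q 2 j i)
    (hx : ∀ i j, x (Y k q 2 i j) = ∑ p, c i j p • Y k q 2 p.1 p.2)
    (hcomm : ∀ u, g (x u) = lam • x (g u)) (hskew : ∀ u v, x (u * v) = g u * x v + x u * v) :
    c 0 0 = 0 := by
  obtain ⟨-, -, h₀₁, h₁₀, h₁₁⟩ := coeffs_of_skew_AB hq ha hb hg hx hskew
  ext ⟨i, j⟩
  fin_cases i <;> fin_cases j
  exacts [coeff_self_eq_zero hq hlam ha hb hg hx hcomm 0 0, h₀₁, h₁₀, h₁₁]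

theorem coeffs_Y11_eq_zero (hq : q ≠ 0) (hlam : lam ^ 2 ≠ 1) (ha : ∀ i, a i ≠ 0)
    (hb : ∀ j, b j ≠ 0) (hg : ∀ i j, g (Y k q 2 i j) = (a i * b j) • Y k q 2 j i)
    (hx : ∀ i j, x (Y k q 2 i j) = ∑ p, c i j p • Y k q 2 p.1 p.2)
    (hcomm : ∀ u, g (x u) = lam • x (g u)) (hskew : ∀ u v, x (u * v) = g u * x v + x u * v) :
    c 1 1 = 0 := by
  obtain ⟨-, -, h₀₀, h₀₁, h₁₀⟩ := coeffs_of_skew_CD hq ha hb hg hx hskew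
  ext ⟨i, j⟩
  fin_cases i <;> fin_cases j
  exacts [h₀₀, h₀₁, h₁₀, coeff_self_eq_zero hq hlam ha hb hg hx hcomm 1 1]

theorem coeffs_Y01_Y10_eq_zero (hq : q ≠ 0) (hq2 : q ^ 2 ≠ 1) (hlam : lam ^ 2 ≠ 1)
    (ha : ∀ i, a i ≠ 0) (hb : ∀ j, b j ≠ 0)
    (hg : ∀ i j, g (Y k q 2 i j) = (a i * b j) • Y k q 2 j i)
    (hx : ∀ i j, x (Y k q 2 i j) = ∑ p, c i j p • Y k q 2 p.1 p.2)
    (hcomm : ∀ u, g (x u) = lam • x (g u)) (hskew : ∀ u v, x (u * v) = g u * x v + x u * v) :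
    c 0 1 = 0 ∧ c 1 0 = 0 := by
  obtain ⟨hAB₀, hAB₁, -⟩ := coeffs_of_skew_AB hq ha hb hg hx hskew
  obtain ⟨hCD₀, hCD₁, -⟩ := coeffs_of_skew_CD hq ha hb hg hx hskew
  obtain ⟨hBC₀, hCB₀, hBC₁, hCB₁⟩ := coeffs_of_skew_BC hq hg hx hskew
  have hαδ : a 0 * b 0 * (a 1 * b 1) = a 0 * b 1 * (a 1 * b 0) := by ring
  obtain ⟨h₀₁, h₁₀⟩ := eq_zero_and_eq_zero_of_relations hαδ hq hq2 hAB₀ hCD₀ hBC₀ hCB₀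
  obtain ⟨h₀₁', h₁₀'⟩ := eq_zero_and_eq_zero_of_relations hαδ (inv_ne_zero hq)
    (by rwa [inv_pow, Ne, inv_eq_one]) hAB₁ hCD₁ hBC₁ hCB₁
  have hs := coeff_self_eq_zero hq hlam ha hb hg hx hcomm
  have ht := coeff_transpose_eq_zero hq hlam ha hb hg hx hcomm
  constructor <;> ext ⟨i, j⟩ <;> fin_cases i <;> fin_cases j
  exacts [h₀₁, hs 0 1, ht 0 1, h₀₁', h₁₀, ht 1 0, hs 1 0, h₁₀']

theorem eq_zero_of_transpose (hq : q ≠ 0) (hq2 : q ^ 2 ≠ 1) (hlam : lam ^ 2 ≠ 1)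
    (ha : ∀ i, a i ≠ 0) (hb : ∀ j, b j ≠ 0)
    (hg : ∀ i j, g (Y k q 2 i j) = (a i * b j) • Y k q 2 j i)
    (hcomm : ∀ u, g (x u) = lam • x (g u)) (hskew : ∀ u v, x (u * v) = g u * x v + x u * v)
    (hV : ∀ u ∈ V k q 2, x u ∈ V k q 2) : x = 0 := by
  have hx : ∀ i j, ∃ c : Fin 2 × Fin 2 → k, x (Y k q 2 i j) = ∑ p, c p • Y k q 2 p.1 p.2 :=
    fun i j => ((Submodule.mem_span_range_iff_exists_fun k).1
      (hV _ (Submodule.subset_span ⟨(i, j), rfl⟩))).imp fun _ h => h.symm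
  choose c hc using hx
  have h₀₀ := coeffs_Y00_eq_zero hq hlam ha hb hg hc hcomm hskew
  have h₁₁ := coeffs_Y11_eq_zero hq hlam ha hb hg hc hcomm hskew
  obtain ⟨h₀₁, h₁₀⟩ := coeffs_Y01_Y10_eq_zero hq hq2 hlam ha hb hg hc hcomm hskew
  refine eq_zero_of_adjoin_eq_top hskew (adjoin_range_Y 2) ?_
  rintro _ ⟨⟨i, j⟩, rfl⟩
  fin_cases i <;> fin_cases j <;> simp [hc, h₀₀, h₀₁, h₁₀, h₁₁]

end TransposeType

end QMat

theorem stmt_10_general {k : Type} [Field k] {q : k} (hq0 : q ≠ 0) (hq1 : q ≠ 1) (hq1' : q ≠ -1)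
    {n m : ℕ} (hm3 : 3 ≤ m) {lam : k} (hlam : IsPrimitiveRoot lam m)
    (T : TaftAction k n m lam 0 (QMat k q 2))
    (hg : ActsAsHTau k q 2 T.g)
    (hxlin : ∀ a ∈ QMat.V k q 2, T.x a ∈ QMat.V k q 2)
    (hx0 : T.x ≠ 0) :
    ∃ a b : Fin 2 → k, (∀ i, a i ≠ 0) ∧ (∀ j, b j ≠ 0) ∧
      ∀ i j, T.g (QMat.Y k q 2 i j) = (a i * b j) • QMat.Y k q 2 i j := by
  obtain ⟨a, b, ha, hb, hdiag | htau⟩ := hg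
  · exact ⟨a, b, ha, hb, hdiag⟩
  · have hq2 : q ^ 2 ≠ 1 := sq_ne_one_iff.2 ⟨hq1, hq1'⟩
    have hlam2 : lam ^ 2 ≠ 1 := hlam.pow_ne_one_of_pos_of_lt two_ne_zero (by omega)
    exact absurd (QMat.eq_zero_of_transpose (g := T.g.toAlgHom) hq0 hq2 hlam2 ha hb htau T.comm
      T.skew hxlin) hx0

/-- Let `q ∈ kˣ` with `q ≠ ±1` and let `m ≥ 3`.  If the generalized Taft
algebra `T_n(λ,m,0)` acts on `O_q(M_2(k))` with `x` acting linearly and nonzero, and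
with `g` acting as an element of the group `H ⋊ ⟨τ⟩` of graded automorphisms, then `g`
must act as an element of `H`, i.e. diagonally on the basis `(A,B,C,D)` of the
degree-one part of `O_q(M_2(k))`. -/
theorem stmt_10 {k : Type} [Field k] {q : k} (hq0 : q ≠ 0) (hq1 : q ≠ 1) (hq1' : q ≠ -1)
    {n m : ℕ} (hm3 : 3 ≤ m) (hmn : m ∣ n) {lam : k} (hlam : IsPrimitiveRoot lam m)
    (T : TaftAction k n m lam 0 (QMat k q 2))
    (hg : ActsAsHTau k q 2 T.g)
    (hxlin : ∀ a ∈ QMat.V k q 2, T.x a ∈ QMat.V k q 2)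
    (hx0 : T.x ≠ 0) :
    ∃ a b : Fin 2 → k, (∀ i, a i ≠ 0) ∧ (∀ j, b j ≠ 0) ∧
      ∀ i j, T.g (QMat.Y k q 2 i j) = (a i * b j) • QMat.Y k q 2 i j :=
  stmt_10_general hq0 hq1 hq1' hm3 hlam T hg hxlin hx0
end
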